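/- arXiv:1102.5466 — 8 statements merged into one kernel-verified Lean document; each statement's English description precedes it below -/
import Mathlib

section
/- Let G be a profinite group isomorphic to Z_p, let γ be a topological generator of G, let A be a ring, and let M be a discrete A[G]-module all of whose elements are of p-primary torsion. Then the map d_γ on the induced module Ind_{A,G}(M) of continuous functions f: G → M, defined by d_γ(f)(g) = γ·f(γ^{-1}g) − f(g), is surjective; hence there is a short exact sequence 0 → M → Ind_{A,G}(M) → Ind_{A,G}(M) → 0 where the first map sends x to the function g ↦ g·x. -/
/-!
Transporting along `e` and rescaling by the unit `toAdd (e γ)` (a topological generator of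
`ℤ_p` is a unit) gives coordinates `G ≃ ℤ_p` in which `γ` is `1`. A locally constant `f`, and
the stabilizers of its finitely many values, are then constant modulo some `p ^ n`. On the powers
`γ ^ i` the equation `d_γ h = f` is the recursion `h (i + 1) = γ • h i - f (γ ^ (i + 1))`,
whose data is `p ^ n`-periodic and fixed by `γ ^ p ^ n`; hence its solution satisfies
`h (r * p ^ n) = r • h (p ^ n)`. Since `h (p ^ n)` is killed by some `p ^ k`, the solution is
`p ^ (k + n)`-periodic and descends to a locally constant function of the coordinate modulo
`p ^ (k + n)`. For the kernel, `d_γ f = 0` gives `f (γ ^ i) = γ ^ i • f 1`, and the same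
approximation of `g` by powers of `γ` gives `f g = g • f 1`.
-/

open Filter Topology Multiplicative

namespace PadicInt

variable {p : ℕ} [Fact p.Prime]

theorem toZModPow_eq_iff_dist_le (n : ℕ) (x y : ℤ_[p]) :
    toZModPow n x = toZModPow n y ↔ dist x y ≤ (p : ℝ) ^ (-(n : ℤ)) := by
  rw [dist_eq_norm, norm_le_pow_iff_mem_span_pow, ← ker_toZModPow, RingHom.mem_ker, map_sub,
    sub_eq_zero]

theorem eventually_dist_lt_of_toZModPow_eq {ε : ℝ} (hε : 0 < ε) :
    ∀ᶠ n in atTop, ∀ x y : ℤ_[p], toZModPow n x = toZModPow n y → dist x y < ε := by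
  obtain ⟨k, hk⟩ := exists_pow_neg_lt p hε
  filter_upwards [eventually_ge_atTop k] with n hn x y hxy
  refine ((toZModPow_eq_iff_dist_le n x y).1 hxy).trans_lt (lt_of_le_of_lt ?_ hk)
  exact zpow_le_zpow_right₀ (by exact_mod_cast (Fact.out : p.Prime).one_le) (by omega)

theorem isLocallyConstant_toZModPow (n : ℕ) :
    IsLocallyConstant (toZModPow n : ℤ_[p] → ZMod (p ^ n)) := by
  refine fun s => isOpen_iff_forall_mem_open.2 fun x hx => ?_
  have hr : (0 : ℝ) < (p : ℝ) ^ (-(n : ℤ)) :=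
    zpow_pos (by exact_mod_cast (Fact.out : p.Prime).pos) _
  refine ⟨Metric.closedBall x _, fun y hy => ?_, IsUltrametricDist.isOpen_closedBall _ hr.ne',
    Metric.mem_closedBall_self hr.le⟩
  rw [Metric.mem_closedBall, ← toZModPow_eq_iff_dist_le] at hy
  simpa [Set.mem_preimage, hy] using hx

theorem eventually_apply_eq_of_toZModPow_eq {X : Type*} {F : ℤ_[p] → X}
    (hF : IsLocallyConstant F) :
    ∀ᶠ n in atTop, ∀ x y, toZModPow n x = toZModPow n y → F x = F y := by
  obtain ⟨δ, hδ, hball⟩ := lebesgue_number_lemma_of_metric isCompact_univ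
    (c := fun z : X => {x | F x = z}) hF.isOpen_fiber (fun x _ => Set.mem_iUnion.2 ⟨F x, rfl⟩)
  filter_upwards [eventually_dist_lt_of_toZModPow_eq (p := p) hδ] with n hn x y hxy
  obtain ⟨z, hz⟩ := hball x trivial
  rw [hz (Metric.mem_ball_self hδ), hz (by rw [Metric.mem_ball, dist_comm]; exact hn x y hxy)]

theorem eventually_mem_of_toZModPow_eq_zero {U : Set ℤ_[p]} (hU : U ∈ 𝓝 0) :
    ∀ᶠ n in atTop, ∀ x, toZModPow n x = 0 → x ∈ U := by
  obtain ⟨ε, hε, hball⟩ := Metric.mem_nhds_iff.1 hU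
  filter_upwards [eventually_dist_lt_of_toZModPow_eq (p := p) hε] with n hn x hx
  exact hball (hn x 0 (by rw [hx, map_zero]))

theorem isUnit_of_denseRange_zsmul {x : ℤ_[p]} (hx : DenseRange (fun n : ℤ => n • x)) :
    IsUnit x := by
  by_contra hnu
  have hsub : Set.range (fun n : ℤ => n • x) ⊆ Metric.ball 0 1 := by
    rintro _ ⟨n, rfl⟩
    rw [mem_ball_zero_iff, ← mem_nonunits, ← IsLocalRing.mem_maximalIdeal]
    exact Submodule.smul_of_tower_mem _ n ((IsLocalRing.mem_maximalIdeal x).2 hnu)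
  have h1 := hx.closure_range ▸ closure_minimal hsub (IsUltrametricDist.isClosed_ball 0 1)
  simpa using h1 (Set.mem_univ (1 : ℤ_[p]))

end PadicInt

section TwistedPartialSum

variable {A M : Type*} [Semiring A] [AddCommGroup M] [Module A M] (E : Module.End A M)
  (φ : ℕ → M)

/-- The closed form is `-∑ j ∈ range i, (E ^ j) (φ (i - j))`. -/
def twistedPartialSum : ℕ → M
  | 0 => 0
  | i + 1 => E (twistedPartialSum i) - φ (i + 1)

@[simp]
theorem twistedPartialSum_zero : twistedPartialSum E φ 0 = 0 := rfl

theorem twistedPartialSum_succ (i : ℕ) :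
    twistedPartialSum E φ (i + 1) = E (twistedPartialSum E φ i) - φ (i + 1) := rfl

theorem apply_sub_twistedPartialSum_succ (i : ℕ) :
    E (twistedPartialSum E φ i) - twistedPartialSum E φ (i + 1) = φ (i + 1) := by
  rw [twistedPartialSum_succ, sub_sub_cancel]

variable {E φ} {N : ℕ}

theorem twistedPartialSum_add_of_periodic (hφ : Function.Periodic φ N) (i : ℕ) :
    twistedPartialSum E φ (i + N) =
      twistedPartialSum E φ i + (E ^ i) (twistedPartialSum E φ N) := by
  induction i with
  | zero => simp
  | succ i ih =>
    rw [add_right_comm, twistedPartialSum_succ, ih, twistedPartialSum_succ, add_right_comm, hφ,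
      map_add, pow_succ', Module.End.mul_apply]
    abel

theorem pow_apply_twistedPartialSum (hE : ∀ i, (E ^ N) (φ i) = φ i) (i : ℕ) :
    (E ^ N) (twistedPartialSum E φ i) = twistedPartialSum E φ i := by
  induction i with
  | zero => simp
  | succ i ih =>
    rw [twistedPartialSum_succ, map_sub, hE, ← Module.End.mul_apply, ← pow_succ, pow_succ',
      Module.End.mul_apply, ih]

theorem twistedPartialSum_mul (hφ : Function.Periodic φ N) (hE : ∀ i, (E ^ N) (φ i) = φ i)
    (r : ℕ) : twistedPartialSum E φ (r * N) = r • twistedPartialSum E φ N := by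
  induction r with
  | zero => simp
  | succ r ih =>
    rw [succ_nsmul, ← ih, add_mul, one_mul, twistedPartialSum_add_of_periodic hφ, pow_mul',
      Module.End.pow_apply, Function.iterate_fixed (pow_apply_twistedPartialSum hE _)]

theorem twistedPartialSum_periodic (hφ : Function.Periodic φ N)
    (hE : ∀ i, (E ^ N) (φ i) = φ i) {r : ℕ} (hr : r • twistedPartialSum E φ N = 0) :
    Function.Periodic (twistedPartialSum E φ) (r * N) := fun i => by
  rw [twistedPartialSum_add_of_periodic (by simpa using hφ.nat_mul r),
    twistedPartialSum_mul hφ hE, hr, map_zero, add_zero]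

theorem apply_sub_val_eq_of_periodic {K : ℕ} [NeZero K] {ψ : ℕ → M}
    (hψ : Function.Periodic ψ K) (hφ : Function.Periodic φ K)
    (h : ∀ i, E (ψ i) - ψ (i + 1) = φ (i + 1)) (x : ZMod K) :
    E (ψ (x - 1).val) - ψ x.val = φ x.val := by
  have hx : (((x - 1).val + 1 : ℕ) : ZMod K) = x := by simp
  have hmod : ∀ {f : ℕ → M}, Function.Periodic f K → f ((x - 1).val + 1) = f x.val :=
    fun hf => by rw [← hf.map_mod_nat, ← ZMod.val_natCast, hx]
  rw [← hmod hψ, ← hmod hφ, h]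

end TwistedPartialSum

open PadicInt

section

variable {p : ℕ} [Fact p.Prime] {G : Type*} [Group G] {c : G ≃* Multiplicative ℤ_[p]} {γ : G}

theorem toAdd_apply_pow (hcγ : c γ = ofAdd 1) (i : ℕ) :
    toAdd (c (γ ^ i)) = i := by
  simp [hcγ]

theorem toZModPow_apply_pow_val (hcγ : c γ = ofAdd 1) {m n : ℕ} (hmn : m ≤ n) (g : G) :
    toZModPow m (toAdd (c (γ ^ (toZModPow n (toAdd (c g))).val))) = toZModPow m (toAdd (c g)) := by
  rw [toAdd_apply_pow hcγ, map_natCast, ZMod.natCast_val, cast_toZModPow _ _ hmn]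

variable {A M : Type*} [Semiring A] [AddCommGroup M] [Module A M] (ρ : G →* Module.End A M)

theorem eq_apply_of_sub_eq_zero (hcγ : c γ = ofAdd 1) {f : G → M} {n : ℕ}
    (hf : ∀ g g', toZModPow n (toAdd (c g)) = toZModPow n (toAdd (c g')) → f g = f g')
    (hρ : ∀ g, toZModPow n (toAdd (c g)) = 0 → ρ g (f 1) = f 1)
    (hker : ∀ g, ρ γ (f (γ⁻¹ * g)) - f g = 0) (g : G) : f g = ρ g (f 1) := by
  have hpow : ∀ i : ℕ, f (γ ^ i) = ρ (γ ^ i) (f 1) := by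
    intro i
    induction i with
    | zero => simp
    | succ i ih =>
      rw [← sub_eq_zero.1 (hker _), pow_succ', inv_mul_cancel_left, ih, map_mul,
        Module.End.mul_apply]
  have hi := toZModPow_apply_pow_val hcγ (le_refl n) g
  set γi := γ ^ (toZModPow n (toAdd (c g))).val
  have hcoset : toZModPow n (toAdd (c (γi⁻¹ * g))) = 0 := by
    rw [map_mul, toAdd_mul, map_inv, toAdd_inv, map_add, map_neg, hi, neg_add_cancel]
  calc f g = f γi := hf _ _ hi.symm
    _ = ρ γi (f 1) := hpow _
    _ = ρ γi (ρ (γi⁻¹ * g) (f 1)) := by rw [hρ _ hcoset]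
    _ = ρ g (f 1) := by rw [← Module.End.mul_apply, ← map_mul, mul_inv_cancel_left]

end

section

variable {p : ℕ} [Fact p.Prime] {G : Type*} [Group G] [TopologicalSpace G]

theorem isUnit_toAdd_of_topologicalClosure_eq_top [IsTopologicalGroup G]
    (e : G ≃* Multiplicative ℤ_[p]) (he : Continuous e) {γ : G}
    (hγ : (Subgroup.zpowers γ).topologicalClosure = ⊤) : IsUnit (toAdd (e γ)) := by
  have hdense : DenseRange (fun n : ℤ => γ ^ n) := by
    have := congrArg SetLike.coe hγ
    rwa [Subgroup.topologicalClosure_coe, Subgroup.coe_zpowers, Subgroup.coe_top,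
      ← dense_iff_closure_eq] at this
  refine isUnit_of_denseRange_zsmul ?_
  have := (toAdd.surjective.comp e.surjective).denseRange.comp hdense (continuous_toAdd.comp he)
  simpa [Function.comp_def] using this

theorem exists_mulEquiv_apply_eq_ofAdd_one (e : G ≃* Multiplicative ℤ_[p]) (he : Continuous e)
    (he' : Continuous e.symm) {γ : G} (hγ : IsUnit (toAdd (e γ))) :
    ∃ c : G ≃* Multiplicative ℤ_[p],
      Continuous c ∧ Continuous c.symm ∧ c γ = ofAdd 1 := by
  obtain ⟨u, hu⟩ := hγ
  refine ⟨e.trans (AddEquiv.toMultiplicative (DistribMulAction.toAddEquiv ℤ_[p] u⁻¹)),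
    ?_, ?_, ?_⟩
  · exact continuous_ofAdd.comp (continuous_const.mul (continuous_toAdd.comp he))
  · refine he'.comp ?_
    change Continuous fun x => ofAdd ((u⁻¹)⁻¹ • toAdd x)
    fun_prop
  · simp [← hu, Units.smul_def]

variable (c : G ≃* Multiplicative ℤ_[p])

theorem eventually_apply_eq_of_toZModPow_toAdd_eq (hc' : Continuous c.symm) {X : Type*}
    {F : G → X} (hF : IsLocallyConstant F) :
    ∀ᶠ n in atTop, ∀ g g', toZModPow n (toAdd (c g)) = toZModPow n (toAdd (c g')) →
      F g = F g' := by
  filter_upwards [eventually_apply_eq_of_toZModPow_eq (hF.comp_continuous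
    (hc'.comp continuous_ofAdd))] with n hn g g' h
  simpa using hn _ _ h

theorem eventually_mem_of_toZModPow_toAdd_eq_zero (hc' : Continuous c.symm) {U : Set G}
    (hU : U ∈ 𝓝 1) : ∀ᶠ n in atTop, ∀ g, toZModPow n (toAdd (c g)) = 0 → g ∈ U := by
  have hU' : (fun x => c.symm (ofAdd x)) ⁻¹' U ∈ 𝓝 0 :=
    (hc'.comp continuous_ofAdd).continuousAt.preimage_mem_nhds (by simpa using hU)
  filter_upwards [eventually_mem_of_toZModPow_eq_zero hU'] with n hn g hg
  simpa using hn _ hg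

variable {A M : Type*} [Semiring A] [AddCommGroup M] [Module A M] (ρ : G →* Module.End A M)
  {c} {γ : G}

theorem exists_locallyConstant_sub_eq (hc : Continuous c) (hcγ : c γ = ofAdd 1)
    (htors : ∀ m : M, ∃ k, p ^ k • m = 0) (f : LocallyConstant G M) {n : ℕ}
    (hf : ∀ g g', toZModPow n (toAdd (c g)) = toZModPow n (toAdd (c g')) → f g = f g')
    (hρ : ∀ g x, toZModPow n (toAdd (c g)) = 0 → ρ g (f x) = f x) :
    ∃ H : LocallyConstant G M, ∀ g, ρ γ (H (γ⁻¹ * g)) - H g = f g := by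
  set φ : ℕ → M := fun i => f (γ ^ i)
  have hpn : ∀ m, n ≤ m → toZModPow n ((p ^ m : ℕ) : ℤ_[p]) = 0 := fun m hm => by
    rw [map_natCast, ZMod.natCast_eq_zero_iff]
    exact pow_dvd_pow p hm
  have hφ : ∀ m, n ≤ m → Function.Periodic φ (p ^ m) := fun m hm i => hf _ _ <| by
    rw [toAdd_apply_pow hcγ, toAdd_apply_pow hcγ, Nat.cast_add, map_add, hpn m hm, add_zero]
  have hE : ∀ i, (ρ γ ^ p ^ n) (φ i) = φ i := fun i => by
    rw [← map_pow]
    exact hρ _ _ (by rw [toAdd_apply_pow hcγ, hpn n le_rfl])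
  set ψ := twistedPartialSum (ρ γ) φ
  obtain ⟨k, hk⟩ := htors (ψ (p ^ n))
  have hψ : Function.Periodic ψ (p ^ (k + n)) := by
    rw [pow_add]
    exact twistedPartialSum_periodic (hφ n le_rfl) hE hk
  refine ⟨⟨fun g => ψ (toZModPow (k + n) (toAdd (c g))).val,
    ((isLocallyConstant_toZModPow _).comp fun x => ψ x.val).comp_continuous
      (continuous_toAdd.comp hc)⟩, fun g => ?_⟩
  have hshift : toZModPow (k + n) (toAdd (c (γ⁻¹ * g))) =
      toZModPow (k + n) (toAdd (c g)) - 1 := by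
    simp [hcγ, sub_eq_neg_add]
  simp only [LocallyConstant.coe_mk, hshift]
  rw [apply_sub_val_eq_of_periodic hψ (hφ _ (by omega)) (apply_sub_twistedPartialSum_succ _ _)]
  exact hf _ _ (toZModPow_apply_pow_val hcγ (by omega) g)

end

theorem statement0_general (p : ℕ) [Fact p.Prime]
    -- `G` : a profinite group isomorphic to `ℤ_p`
    (G : Type*) [Group G] [TopologicalSpace G] [IsTopologicalGroup G] [CompactSpace G]
    (e : G ≃* Multiplicative ℤ_[p]) (he : Continuous e) (he' : Continuous e.symm)
    -- `γ` : a topological generator of `G`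
    (γ : G) (hγ : (Subgroup.zpowers γ).topologicalClosure = ⊤)
    -- `M` : a discrete `A[G]`-module, all of whose elements are of `p`-primary torsion
    (A : Type*) [Ring A] (M : Type*) [AddCommGroup M] [Module A M]
    (ρ : G →* Module.End A M)
    (hdisc : ∀ m : M, IsOpen {g : G | ρ g m = m})
    (htors : ∀ m : M, ∃ k : ℕ, p ^ k • m = 0) :
    -- `d_γ` is surjective on `Ind_{A,G}(M)`, the module of continuous functions `G → M`
    (∀ f : LocallyConstant G M, ∃ h : LocallyConstant G M,
      ∀ g : G, ρ γ (h (γ⁻¹ * g)) - h g = f g) ∧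
    -- hence the sequence `0 → M → Ind_{A,G}(M) → Ind_{A,G}(M) → 0` is exact :
    -- injectivity of `ε : x ↦ (g ↦ g·x)` ...
    (∀ x y : M, (∀ g : G, ρ g x = ρ g y) → x = y) ∧
    -- ... and exactness in the middle : `ker d_γ = image ε`
    (∀ f : LocallyConstant G M,
      (∀ g : G, ρ γ (f (γ⁻¹ * g)) - f g = 0) ↔ (∃ x : M, ∀ g : G, f g = ρ g x)) := by
  obtain ⟨c, hc, hc', hcγ⟩ := exists_mulEquiv_apply_eq_ofAdd_one e he he'
    (isUnit_toAdd_of_topologicalClosure_eq_top e he hγ)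
  have hlevel : ∀ f : LocallyConstant G M, ∃ n,
      (∀ g g', toZModPow n (toAdd (c g)) = toZModPow n (toAdd (c g')) → f g = f g') ∧
      ∀ g x, toZModPow n (toAdd (c g)) = 0 → ρ g (f x) = f x := fun f => by
    have hstab (m : M) : ∀ᶠ n in atTop, ∀ g, toZModPow n (toAdd (c g)) = 0 → ρ g m = m :=
      eventually_mem_of_toZModPow_toAdd_eq_zero c hc' ((hdisc m).mem_nhds (by simp))
    obtain ⟨n, hf, hρ⟩ := ((eventually_apply_eq_of_toZModPow_toAdd_eq c hc'
      f.isLocallyConstant).and (f.range_finite.eventually_all.2 fun m _ => hstab m)).exists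
    exact ⟨n, hf, fun g x hg => hρ (f x) ⟨x, rfl⟩ g hg⟩
  refine ⟨fun f => ?_, fun x y h => by simpa using h 1, fun f => ⟨fun hker => ?_, ?_⟩⟩
  · obtain ⟨n, hf, hρ⟩ := hlevel f
    exact exists_locallyConstant_sub_eq ρ hc hcγ htors f hf hρ
  · obtain ⟨n, hf, hρ⟩ := hlevel f
    exact ⟨f 1, eq_apply_of_sub_eq_zero ρ hcγ hf (fun g => hρ g 1) hker⟩
  · rintro ⟨x, hx⟩ g
    rw [hx, hx, ← Module.End.mul_apply, ← map_mul, mul_inv_cancel_left, sub_self]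

theorem statement0 (p : ℕ) [Fact p.Prime]
    -- `G` : a profinite group isomorphic to `ℤ_p`
    (G : Type*) [Group G] [TopologicalSpace G] [IsTopologicalGroup G]
    [CompactSpace G] [T2Space G] [TotallyDisconnectedSpace G]
    (e : G ≃* Multiplicative ℤ_[p]) (he : Continuous e) (he' : Continuous e.symm)
    -- `γ` : a topological generator of `G`
    (γ : G) (hγ : (Subgroup.zpowers γ).topologicalClosure = ⊤)
    -- `M` : a discrete `A[G]`-module, all of whose elements are of `p`-primary torsion
    (A : Type*) [Ring A] (M : Type*) [AddCommGroup M] [Module A M]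
    (ρ : G →* Module.End A M)
    (hdisc : ∀ m : M, IsOpen {g : G | ρ g m = m})
    (htors : ∀ m : M, ∃ k : ℕ, p ^ k • m = 0) :
    -- `d_γ` is surjective on `Ind_{A,G}(M)`, the module of continuous functions `G → M`
    (∀ f : LocallyConstant G M, ∃ h : LocallyConstant G M,
      ∀ g : G, ρ γ (h (γ⁻¹ * g)) - h g = f g) ∧
    -- hence the sequence `0 → M → Ind_{A,G}(M) → Ind_{A,G}(M) → 0` is exact :
    -- injectivity of `ε : x ↦ (g ↦ g·x)` ...
    (∀ x y : M, (∀ g : G, ρ g x = ρ g y) → x = y) ∧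
    -- ... and exactness in the middle : `ker d_γ = image ε`
    (∀ f : LocallyConstant G M,
      (∀ g : G, ρ γ (f (γ⁻¹ * g)) - f g = 0) ↔ (∃ x : M, ∀ g : G, f g = ρ g x)) :=
  statement0_general p G e he he' γ hγ A M ρ hdisc htors
end

section
/- Let A be a Dedekind domain, G a profinite group, and M a discrete A-G-module whose underlying A-module is flat. Then for all integers q ≥ 0 and any flat A-module N, the canonical morphism H^q(G, M) ⊗_A N → H^q(G, M ⊗_A N) is an isomorphism. -/
/-!
STATEMENT 6.  Let `A` be a Dedekind domain, `G` a profinite group, and `M` a discrete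
`A`-`G`-module whose underlying `A`-module is flat.  Then for all integers `q ≥ 0` and
any flat `A`-module `N`, the canonical morphism
`H^q(G, M) ⊗_A N → H^q(G, M ⊗_A N)` is an isomorphism.

Continuous cohomology is computed by the complex of locally constant inhomogeneous
cochains.  The canonical morphism is induced on cocycles by `z ⊗ c ↦ (x ↦ z(x) ⊗ c)`;
that it is an isomorphism is expressed by: (well-definedness) the image of a continuous
cocycle is a continuous cocycle and the image of a coboundary-tensor is a coboundary,
(surjectivity) every continuous cocycle of `M ⊗ N` is, modulo coboundaries, of this
form, and (injectivity) a tensor of cocycles mapping to a coboundary comes from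
`B^q(G,M) ⊗ N` (the cohomology `H^q(G,M) ⊗ N` being the quotient of `Z^q(G,M) ⊗ N` by
the image of `B^q(G,M) ⊗ N`, by right exactness of the tensor product).
-/
set_option linter.unusedSectionVars false

noncomputable section

section Coh

variable {G : Type*} [Group G] [TopologicalSpace G]
variable {A : Type*} [CommRing A] {M : Type*} [AddCommGroup M] [Module A M]

/-- The differential of the complex of inhomogeneous continuous cochains of the
topological group `G` with values in the `A`-linear representation `ρ`. -/
def dFun (ρ : G →* Module.End A M) (q : ℕ) (f : (Fin q → G) → M) :
    (Fin (q + 1) → G) → M :=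
  fun g => ρ (g 0) (f fun i => g i.succ) +
    ∑ j : Fin (q + 1), ((-1 : ℤ) ^ ((j : ℕ) + 1)) • f (Fin.contractNth j (· * ·) g)

theorem dFun_add (ρ : G →* Module.End A M) (q : ℕ) (f g : (Fin q → G) → M) :
    dFun ρ q (f + g) = dFun ρ q f + dFun ρ q g := by
  funext x
  simp only [dFun, Pi.add_apply, map_add, smul_add, Finset.sum_add_distrib]
  abel

theorem dFun_smul (ρ : G →* Module.End A M) (q : ℕ) (a : A) (f : (Fin q → G) → M) :
    dFun ρ q (a • f) = a • dFun ρ q f := by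
  funext x
  simp only [dFun, Pi.smul_apply, map_smul, smul_comm _ a, Finset.smul_sum, smul_add]

theorem dFun_zero (ρ : G →* Module.End A M) (q : ℕ) : dFun (M := M) ρ q 0 = 0 := by
  funext x; simp [dFun]

theorem IsLocallyConstant.add'' {X : Type*} [TopologicalSpace X] {f g : X → M}
    (hf : IsLocallyConstant f) (hg : IsLocallyConstant g) : IsLocallyConstant (f + g) :=
  (hf.prodMk hg).comp (fun p : M × M => p.1 + p.2)

/-- The `A`-module of continuous (= locally constant) `q`-cocycles. -/
def Zsub (ρ : G →* Module.End A M) (q : ℕ) : Submodule A ((Fin q → G) → M) where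
  carrier := {f | IsLocallyConstant f ∧ dFun ρ q f = 0}
  add_mem' := fun hf hg => ⟨hf.1.add'' hg.1, by rw [dFun_add, hf.2, hg.2, add_zero]⟩
  zero_mem' := ⟨IsLocallyConstant.const 0, dFun_zero ρ q⟩
  smul_mem' := fun a f hf => ⟨hf.1.comp (a • ·), by rw [dFun_smul, hf.2, smul_zero]⟩

/-- The `A`-module of continuous `q`-coboundaries (of continuous cochains). -/
def Bsub (ρ : G →* Module.End A M) : (q : ℕ) → Submodule A ((Fin q → G) → M)
  | 0 => ⊥
  | (q + 1) =>
    { carrier := {F | IsLocallyConstant F ∧ ∃ h, IsLocallyConstant h ∧ dFun ρ q h = F}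
      add_mem' := fun {F1 F2} hF1 hF2 =>
        ⟨hF1.1.add'' hF2.1, hF1.2.choose + hF2.2.choose,
          hF1.2.choose_spec.1.add'' hF2.2.choose_spec.1, by
            rw [dFun_add, hF1.2.choose_spec.2, hF2.2.choose_spec.2]⟩
      zero_mem' := ⟨IsLocallyConstant.const 0, 0, IsLocallyConstant.const 0, dFun_zero ρ q⟩
      smul_mem' := fun a F hF =>
        ⟨hF.1.comp (a • ·), a • hF.2.choose, hF.2.choose_spec.1.comp (a • ·), by
          rw [dFun_smul, hF.2.choose_spec.2]⟩ }

/-- The continuous cohomology `H^q(G, M)` of the topological group `G` with values in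
the `A`-linear representation `ρ`, as an `A`-module. -/
abbrev Hmod (ρ : G →* Module.End A M) (q : ℕ) :=
  ↥(Zsub ρ q) ⧸ (Bsub ρ q).comap (Zsub ρ q).subtype

end Coh

open scoped TensorProduct

section

variable {G : Type*} [Group G] [TopologicalSpace G]
variable {A : Type*} [CommRing A] {M : Type*} [AddCommGroup M] [Module A M]

/-- `f` is the coboundary of a continuous cochain. -/
def IsCoboundary (ρ : G →* Module.End A M) : (q : ℕ) → ((Fin q → G) → M) → Prop
  | 0, f => f = 0
  | (q + 1), f => ∃ h : (Fin q → G) → M, IsLocallyConstant h ∧ dFun ρ q h = f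

theorem IsCoboundary.add {ρ : G →* Module.End A M} {q : ℕ} {f g : (Fin q → G) → M}
    (hf : IsCoboundary ρ q f) (hg : IsCoboundary ρ q g) : IsCoboundary ρ q (f + g) := by
  cases q with
  | zero =>
    simp only [IsCoboundary] at *
    rw [hf, hg, add_zero]
  | succ q =>
    obtain ⟨h1, hl1, hd1⟩ := hf
    obtain ⟨h2, hl2, hd2⟩ := hg
    exact ⟨h1 + h2, hl1.add'' hl2, by rw [dFun_add, hd1, hd2]⟩

theorem IsCoboundary.zero (ρ : G →* Module.End A M) (q : ℕ) :
    IsCoboundary ρ q (0 : (Fin q → G) → M) := by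
  cases q with
  | zero => simp only [IsCoboundary]
  | succ q => exact ⟨0, IsLocallyConstant.const 0, dFun_zero ρ q⟩

theorem IsCoboundary.smul {ρ : G →* Module.End A M} {q : ℕ} (a : A) {f : (Fin q → G) → M}
    (hf : IsCoboundary ρ q f) : IsCoboundary ρ q (a • f) := by
  cases q with
  | zero =>
    simp only [IsCoboundary] at *
    rw [hf, smul_zero]
  | succ q =>
    obtain ⟨h, hl, hd⟩ := hf
    exact ⟨a • h, hl.comp (a • ·), by rw [dFun_smul, hd]⟩

/-- The submodule of `Z^q(G,M)` consisting of continuous coboundaries. -/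
def BZ (ρ : G →* Module.End A M) (q : ℕ) : Submodule A ↥(Zsub ρ q) where
  carrier := {z | IsCoboundary ρ q (z : (Fin q → G) → M)}
  add_mem' := fun h1 h2 => h1.add h2
  zero_mem' := IsCoboundary.zero ρ q
  smul_mem' := fun a z hz => hz.smul a

/-- The action of `G` on `M ⊗[A] N` through the first factor. -/
def rhoT (ρ : G →* Module.End A M) (N : Type*) [AddCommGroup N] [Module A N] :
    G →* Module.End A (M ⊗[A] N) where
  toFun g := (ρ g).rTensor N
  map_one' := by
    show (ρ 1).rTensor N = 1
    rw [map_one, Module.End.one_eq_id, LinearMap.rTensor_id]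
    rfl
  map_mul' g h := by
    show (ρ (g * h)).rTensor N = (ρ g).rTensor N * (ρ h).rTensor N
    rw [map_mul, Module.End.mul_eq_comp, LinearMap.rTensor_comp, ← Module.End.mul_eq_comp]

end

/-!
For compact `X`, a locally constant function on `X` takes finitely many values, so it factors
through a finite set `V`, and `(V → M) ⊗ N ≃ (V → M ⊗ N)`. Hence `f ⊗ c ↦ (x ↦ f x ⊗ c)`
identifies `LC(X, M) ⊗ N` with `LC(X, M ⊗ N)`, compatibly with the differential: the complex of
locally constant cochains of `M ⊗ N` is that of `M` tensored with `N`. As `N` is flat, tensoring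
with `N` commutes with taking the kernel of the differential (surjectivity) and with intersecting
the cocycles with its image (injectivity).
-/

section LocallyConstantTensor

variable (A : Type*) [CommRing A] (X : Type*) [TopologicalSpace X]
variable (M : Type*) [AddCommGroup M] [Module A M] (N : Type*) [AddCommGroup N] [Module A N]

def locallyConstantSubmodule : Submodule A (X → M) where
  carrier := {f | IsLocallyConstant f}
  add_mem' hf hg := hf.add hg
  zero_mem' := IsLocallyConstant.const 0
  smul_mem' a _ hf := hf.comp (a • ·)

def locallyConstantTensorMap :
    locallyConstantSubmodule A X M ⊗[A] N →ₗ[A] (X → M ⊗[A] N) :=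
  TensorProduct.lift <| LinearMap.mk₂ A (fun f c x => (f : X → M) x ⊗ₜ[A] c)
    (fun _ _ _ => funext fun _ => TensorProduct.add_tmul _ _ _)
    (fun _ _ _ => funext fun _ => TensorProduct.smul_tmul' _ _ _ |>.symm)
    (fun _ _ _ => funext fun _ => TensorProduct.tmul_add _ _ _)
    (fun _ _ _ => funext fun _ => TensorProduct.tmul_smul _ _ _)

variable {A X M N}

@[simp]
theorem mem_locallyConstantSubmodule {f : X → M} :
    f ∈ locallyConstantSubmodule A X M ↔ IsLocallyConstant f :=
  Iff.rfl

@[simp]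
theorem locallyConstantTensorMap_tmul (f : locallyConstantSubmodule A X M) (c : N) :
    locallyConstantTensorMap A X M N (f ⊗ₜ c) = fun x => (f : X → M) x ⊗ₜ[A] c :=
  rfl

def locallyConstantPullback {V : Type*} (π : X → V) (hπ : IsLocallyConstant π) :
    (V → M) →ₗ[A] locallyConstantSubmodule A X M where
  toFun g := ⟨g ∘ π, mem_locallyConstantSubmodule.2 (hπ.comp g)⟩
  map_add' _ _ := rfl
  map_smul' _ _ := rfl

theorem locallyConstantTensorMap_rTensor_pullback {V : Type*} [Fintype V] [DecidableEq V]
    (π : X → V) (hπ : IsLocallyConstant π) (s : (V → M) ⊗[A] N) (x : X) :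
    locallyConstantTensorMap A X M N ((locallyConstantPullback π hπ).rTensor N s) x =
      TensorProduct.piLeft A N (fun _ : V => M) s (π x) := by
  induction s with
  | zero => simp
  | tmul g c => simp [locallyConstantPullback]
  | add s t hs ht => simp_all

theorem IsLocallyConstant.rangeFactorization {Y : Type*} {f : X → Y}
    (hf : IsLocallyConstant f) : IsLocallyConstant (Set.rangeFactorization f) :=
  .desc _ Subtype.val hf Subtype.val_injective

theorem locallyConstantTensorMap_injective [CompactSpace X] :
    Function.Injective (locallyConstantTensorMap A X M N) := by
  classical
  rw [injective_iff_map_eq_zero]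
  intro t ht
  obtain ⟨k, f, c, rfl⟩ := TensorProduct.exists_sum_tmul_eq t
  let Φ : X → Fin k → M := fun x j => (f j : X → M) x
  have hΦ : IsLocallyConstant Φ :=
    (LocallyConstant.unflip fun j =>
      (⟨f j, mem_locallyConstantSubmodule.1 (f j).2⟩ : LocallyConstant X M)).isLocallyConstant
  have := hΦ.range_finite.fintype
  let π := Set.rangeFactorization Φ
  have hπ : IsLocallyConstant π := hΦ.rangeFactorization
  let s : (Set.range Φ → M) ⊗[A] N := ∑ j, (fun v => (v : Fin k → M) j) ⊗ₜ c j
  have hts : ∑ j, f j ⊗ₜ c j = (locallyConstantPullback π hπ).rTensor N s := by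
    simp only [s, map_sum, LinearMap.rTensor_tmul]
    rfl
  have hs : TensorProduct.piLeft A N (fun _ => M) s = 0 := by
    funext v
    obtain ⟨x, rfl⟩ := Set.rangeFactorization_surjective v
    rw [← locallyConstantTensorMap_rTensor_pullback π hπ, ← hts, ht]
    rfl
  rw [hts, (LinearEquiv.map_eq_zero_iff _).1 hs, map_zero]

theorem exists_locallyConstantTensorMap_eq [CompactSpace X] {F : X → M ⊗[A] N}
    (hF : IsLocallyConstant F) :
    ∃ t, locallyConstantTensorMap A X M N t = F := by
  classical
  have := hF.range_finite.fintype
  refine ⟨(locallyConstantPullback _ hF.rangeFactorization).rTensor N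
    ((TensorProduct.piLeft A N _).symm Subtype.val), funext fun x => ?_⟩
  rw [locallyConstantTensorMap_rTensor_pullback, LinearEquiv.apply_symm_apply]
  rfl

end LocallyConstantTensor

theorem Module.Flat.mem_range_rTensor_comap_range {R : Type*} [CommRing R]
    {N P Q Z : Type*} [AddCommGroup N] [Module R N] [Module.Flat R N]
    [AddCommGroup P] [Module R P] [AddCommGroup Q] [Module R Q] [AddCommGroup Z] [Module R Z]
    (f : P →ₗ[R] Q) (g : Z →ₗ[R] Q) {t : Z ⊗[R] N} {u : P ⊗[R] N}
    (h : g.rTensor N t = f.rTensor N u) :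
    t ∈ LinearMap.range (((LinearMap.range f).comap g).subtype.rTensor N) := by
  have hexact : Function.Exact ((LinearMap.range f).comap g).subtype
      ((LinearMap.range f).mkQ ∘ₗ g) := by
    have := LinearMap.exact_subtype_ker_map ((LinearMap.range f).mkQ ∘ₗ g)
    rwa [LinearMap.ker_comp, Submodule.ker_mkQ] at this
  refine (Module.Flat.rTensor_exact N hexact t).1 ?_
  rw [LinearMap.rTensor_comp_apply, h, ← LinearMap.rTensor_comp_apply, LinearMap.range_mkQ_comp,
    LinearMap.rTensor_zero, LinearMap.zero_apply]

section Differential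

variable {G : Type*} [Group G]
variable {A : Type*} [CommRing A] {M : Type*} [AddCommGroup M] [Module A M]
variable {N : Type*} [AddCommGroup N] [Module A N]

theorem dFun_tmul (ρ : G →* Module.End A M) (q : ℕ) (f : (Fin q → G) → M) (c : N) :
    dFun (rhoT ρ N) q (fun x => f x ⊗ₜ[A] c) = fun x => dFun ρ q f x ⊗ₜ[A] c := by
  funext x
  simp only [dFun, TensorProduct.add_tmul, TensorProduct.sum_tmul, TensorProduct.smul_tmul']
  rfl

variable [TopologicalSpace G]

theorem isLocallyConstant_orbit (ρ : G →* Module.End A M)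
    (hdisc : ∀ m : M, IsOpen {g : G | ρ g m = m}) [IsTopologicalGroup G] (m : M) :
    IsLocallyConstant fun g => ρ g m := by
  refine (IsLocallyConstant.iff_exists_open _).2 fun g₀ => ?_
  refine ⟨(g₀⁻¹ * ·) ⁻¹' {g | ρ g m = m}, (hdisc m).preimage (continuous_const_mul _),
    by simp, fun g hg => ?_⟩
  calc ρ g m = ρ g₀ (ρ (g₀⁻¹ * g) m) := by
        rw [← Module.End.mul_apply, ← map_mul, mul_inv_cancel_left]
    _ = ρ g₀ m := by rw [hg]

theorem IsLocallyConstant.rep_apply (ρ : G →* Module.End A M)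
    (hdisc : ∀ m : M, IsOpen {g : G | ρ g m = m}) [IsTopologicalGroup G]
    {Y : Type*} [TopologicalSpace Y] {k : Y → G} (hk : Continuous k) {h : Y → M}
    (hh : IsLocallyConstant h) : IsLocallyConstant fun y => ρ (k y) (h y) := by
  refine (IsLocallyConstant.iff_eventually_eq _).2 fun y₀ => ?_
  have hρ := hk.tendsto y₀ |>.eventually <|
    (isLocallyConstant_orbit ρ hdisc (h y₀)).eventually_eq (k y₀)
  filter_upwards [hh.eventually_eq y₀, hρ] with y hy hy'
  rw [hy, hy']

theorem continuous_contractNth {H : Type*} [TopologicalSpace H] [Mul H] [ContinuousMul H] {q : ℕ}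
    (j : Fin (q + 1)) : Continuous fun g : Fin (q + 1) → H => Fin.contractNth j (· * ·) g := by
  refine continuous_pi fun i => ?_
  unfold Fin.contractNth
  split_ifs
  · exact continuous_apply _
  · exact (continuous_apply _).mul (continuous_apply _)
  · exact continuous_apply _

theorem isLocallyConstant_dFun (ρ : G →* Module.End A M)
    (hdisc : ∀ m : M, IsOpen {g : G | ρ g m = m}) [IsTopologicalGroup G] {q : ℕ}
    {f : (Fin q → G) → M} (hf : IsLocallyConstant f) : IsLocallyConstant (dFun ρ q f) := by
  refine mem_locallyConstantSubmodule (A := A).1 <| add_mem ?_ ?_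
  · exact hf.comp_continuous (continuous_pi fun i => continuous_apply i.succ)
      |>.rep_apply ρ hdisc (continuous_apply 0)
  · rw [← Finset.sum_fn]
    exact Submodule.sum_mem _ fun j _ => mem_locallyConstantSubmodule.2 <|
      (hf.comp_continuous (continuous_contractNth j)).comp _

def dLocallyConstant (ρ : G →* Module.End A M) (hdisc : ∀ m : M, IsOpen {g : G | ρ g m = m})
    [IsTopologicalGroup G] (q : ℕ) :
    locallyConstantSubmodule A (Fin q → G) M →ₗ[A]
      locallyConstantSubmodule A (Fin (q + 1) → G) M where
  toFun f := ⟨dFun ρ q f, isLocallyConstant_dFun ρ hdisc f.2⟩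
  map_add' f g := Subtype.ext (dFun_add ρ q f g)
  map_smul' a f := Subtype.ext (dFun_smul ρ q a f)

theorem tmul_mem_Zsub {ρ : G →* Module.End A M} {q : ℕ} {f : (Fin q → G) → M}
    (hf : f ∈ Zsub ρ q) (c : N) : (fun x => f x ⊗ₜ[A] c) ∈ Zsub (rhoT ρ N) q := by
  refine ⟨hf.1.comp (· ⊗ₜ[A] c), ?_⟩
  rw [dFun_tmul, hf.2]
  exact funext fun _ => TensorProduct.zero_tmul _ _

theorem IsCoboundary.tmul {ρ : G →* Module.End A M} {q : ℕ} {f : (Fin q → G) → M}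
    (hf : IsCoboundary ρ q f) (c : N) : IsCoboundary (rhoT ρ N) q fun x => f x ⊗ₜ[A] c := by
  cases q with
  | zero =>
    obtain rfl : f = 0 := hf
    exact funext fun _ => TensorProduct.zero_tmul _ _
  | succ q =>
    obtain ⟨h, hh, rfl⟩ := hf
    exact ⟨fun x => h x ⊗ₜ[A] c, hh.comp (· ⊗ₜ[A] c), dFun_tmul ρ q h c⟩

theorem locallyConstantTensorMap_rTensor_dLocallyConstant (ρ : G →* Module.End A M)
    (hdisc : ∀ m : M, IsOpen {g : G | ρ g m = m}) [IsTopologicalGroup G] (q : ℕ)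
    (t : locallyConstantSubmodule A (Fin q → G) M ⊗[A] N) :
    locallyConstantTensorMap A _ M N ((dLocallyConstant ρ hdisc q).rTensor N t) =
      dFun (rhoT ρ N) q (locallyConstantTensorMap A _ M N t) := by
  induction t with
  | zero => simp [dFun_zero]
  | tmul f c => exact (dFun_tmul ρ q f c).symm
  | add s t hs ht => simp [hs, ht, dFun_add]

theorem Zsub_le_locallyConstantSubmodule (ρ : G →* Module.End A M) (q : ℕ) :
    Zsub ρ q ≤ locallyConstantSubmodule A (Fin q → G) M :=
  fun _ hf => hf.1

theorem exact_inclusion_dLocallyConstant (ρ : G →* Module.End A M)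
    (hdisc : ∀ m : M, IsOpen {g : G | ρ g m = m}) [IsTopologicalGroup G] (q : ℕ) :
    Function.Exact (Submodule.inclusion (Zsub_le_locallyConstantSubmodule ρ q))
      (dLocallyConstant ρ hdisc q) := by
  intro f
  constructor
  · intro hf
    exact ⟨⟨f, f.2, congrArg Subtype.val hf⟩, rfl⟩
  · rintro ⟨z, rfl⟩
    exact Subtype.ext z.2.2

theorem BZ_succ_eq_comap_range (ρ : G →* Module.End A M)
    (hdisc : ∀ m : M, IsOpen {g : G | ρ g m = m}) [IsTopologicalGroup G] (q : ℕ) :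
    BZ ρ (q + 1) = (LinearMap.range (dLocallyConstant ρ hdisc q)).comap
      (Submodule.inclusion (Zsub_le_locallyConstantSubmodule ρ (q + 1))) := by
  ext z
  constructor
  · rintro ⟨h, hh, hd⟩
    exact ⟨⟨h, hh⟩, Subtype.ext hd⟩
  · rintro ⟨h, hd⟩
    exact ⟨h, h.2, congrArg Subtype.val hd⟩

theorem locallyConstantTensorMap_rTensor_inclusion_sum (ρ : G →* Module.End A M) {q k : ℕ}
    (z : Fin k → Zsub ρ q) (c : Fin k → N) :
    locallyConstantTensorMap A _ M N
        ((Submodule.inclusion (Zsub_le_locallyConstantSubmodule ρ q)).rTensor N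
          (∑ j, z j ⊗ₜ c j)) =
      fun x => ∑ j, (z j : (Fin q → G) → M) x ⊗ₜ[A] c j := by
  funext x
  simp [map_sum, Finset.sum_apply]

end Differential

section Comparison

variable {G : Type*} [Group G] [TopologicalSpace G] [IsTopologicalGroup G] [CompactSpace G]
variable {A : Type*} [CommRing A] {M : Type*} [AddCommGroup M] [Module A M]
variable {N : Type*} [AddCommGroup N] [Module A N] [Module.Flat A N]
variable (ρ : G →* Module.End A M)

theorem exists_eq_sum_tmul_of_isCocycle (hdisc : ∀ m : M, IsOpen {g : G | ρ g m = m}) {q : ℕ}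
    {F : (Fin q → G) → M ⊗[A] N} (hF : IsLocallyConstant F) (hdF : dFun (rhoT ρ N) q F = 0) :
    ∃ (k : ℕ) (z : Fin k → Zsub ρ q) (c : Fin k → N),
      F = fun x => ∑ j, (z j : (Fin q → G) → M) x ⊗ₜ[A] c j := by
  obtain ⟨t, rfl⟩ := exists_locallyConstantTensorMap_eq hF
  have ht : (dLocallyConstant ρ hdisc q).rTensor N t = 0 :=
    locallyConstantTensorMap_injective <| by
      rw [locallyConstantTensorMap_rTensor_dLocallyConstant, hdF, map_zero]
  obtain ⟨u, rfl⟩ :=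
    (Module.Flat.rTensor_exact N (exact_inclusion_dLocallyConstant ρ hdisc q) t).1 ht
  obtain ⟨k, z, c, rfl⟩ := TensorProduct.exists_sum_tmul_eq u
  exact ⟨k, z, c, locallyConstantTensorMap_rTensor_inclusion_sum ρ z c⟩

theorem mem_range_of_isCoboundary_sum_tmul (hdisc : ∀ m : M, IsOpen {g : G | ρ g m = m})
    {q k : ℕ} (z : Fin k → Zsub ρ q) (c : Fin k → N)
    (hcob : IsCoboundary (rhoT ρ N) q
      fun x => ∑ j, (z j : (Fin q → G) → M) x ⊗ₜ[A] c j) :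
    ∑ j, z j ⊗ₜ[A] c j ∈
      LinearMap.range (TensorProduct.map (BZ ρ q).subtype (LinearMap.id (M := N))) := by
  rw [← locallyConstantTensorMap_rTensor_inclusion_sum] at hcob
  cases q with
  | zero =>
    have hzero : ∑ j, z j ⊗ₜ[A] c j = 0 :=
      Module.Flat.rTensor_preserves_injective_linearMap _ (Submodule.inclusion_injective _) <|
        locallyConstantTensorMap_injective (hcob.trans (map_zero _).symm) |>.trans
          (map_zero _).symm
    rw [hzero]
    exact zero_mem _
  | succ q =>
    obtain ⟨h, hh, hd⟩ := hcob
    obtain ⟨w, rfl⟩ := exists_locallyConstantTensorMap_eq hh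
    rw [← locallyConstantTensorMap_rTensor_dLocallyConstant ρ hdisc] at hd
    rw [BZ_succ_eq_comap_range ρ hdisc]
    exact Module.Flat.mem_range_rTensor_comap_range _ _ (locallyConstantTensorMap_injective hd).symm

end Comparison

theorem statement6_general
    (A : Type*) [CommRing A]
    -- `G` : a profinite group
    (G : Type*) [Group G] [TopologicalSpace G] [IsTopologicalGroup G]
    [CompactSpace G]
    -- `M` : a discrete `A`-`G`-module whose underlying `A`-module is flat
    (M : Type*) [AddCommGroup M] [Module A M]
    (ρ : G →* Module.End A M)
    (hdisc : ∀ m : M, IsOpen {g : G | ρ g m = m})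
    -- `N` : a flat `A`-module
    (N : Type*) [AddCommGroup N] [Module A N] [Module.Flat A N]
    (q : ℕ) :
    -- well-definedness : cocycle-tensors are sent to continuous cocycles ...
    (∀ (z : ↥(Zsub ρ q)) (c : N),
      (fun x => ((z : (Fin q → G) → M) x) ⊗ₜ[A] c) ∈ Zsub (rhoT ρ N) q) ∧
    -- ... and coboundary-tensors to coboundaries
    (∀ (b : ↥(BZ ρ q)) (c : N),
      IsCoboundary (rhoT ρ N) q
        (fun x => (((b : ↥(Zsub ρ q)) : (Fin q → G) → M) x) ⊗ₜ[A] c)) ∧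
    -- surjectivity modulo coboundaries
    (∀ F : (Fin q → G) → (M ⊗[A] N), IsLocallyConstant F → dFun (rhoT ρ N) q F = 0 →
      ∃ (k : ℕ) (z : Fin k → ↥(Zsub ρ q)) (c : Fin k → N),
        IsCoboundary (rhoT ρ N) q
          (F - fun x => ∑ j, ((z j : (Fin q → G) → M) x) ⊗ₜ[A] c j)) ∧
    -- injectivity
    (∀ (k : ℕ) (z : Fin k → ↥(Zsub ρ q)) (c : Fin k → N),
      IsCoboundary (rhoT ρ N) q
        (fun x => ∑ j, ((z j : (Fin q → G) → M) x) ⊗ₜ[A] c j) →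
      (∑ j, (z j) ⊗ₜ[A] (c j)) ∈
        LinearMap.range (TensorProduct.map (Submodule.subtype (BZ ρ q))
          (LinearMap.id (M := N)))) := by
  refine ⟨fun z c => tmul_mem_Zsub z.2 c, fun b c => IsCoboundary.tmul b.2 c,
    fun F hF hdF => ?_, fun k z c => mem_range_of_isCoboundary_sum_tmul ρ hdisc z c⟩
  obtain ⟨k, z, c, rfl⟩ := exists_eq_sum_tmul_of_isCocycle ρ hdisc hF hdF
  refine ⟨k, z, c, ?_⟩
  rw [sub_self]
  exact IsCoboundary.zero _ _

theorem statement6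
    (A : Type*) [CommRing A] [IsDedekindDomain A]
    -- `G` : a profinite group
    (G : Type*) [Group G] [TopologicalSpace G] [IsTopologicalGroup G]
    [CompactSpace G] [T2Space G] [TotallyDisconnectedSpace G]
    -- `M` : a discrete `A`-`G`-module whose underlying `A`-module is flat
    (M : Type*) [AddCommGroup M] [Module A M] [Module.Flat A M]
    (ρ : G →* Module.End A M)
    (hdisc : ∀ m : M, IsOpen {g : G | ρ g m = m})
    -- `N` : a flat `A`-module
    (N : Type*) [AddCommGroup N] [Module A N] [Module.Flat A N]
    (q : ℕ) :
    -- well-definedness : cocycle-tensors are sent to continuous cocycles ...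
    (∀ (z : ↥(Zsub ρ q)) (c : N),
      (fun x => ((z : (Fin q → G) → M) x) ⊗ₜ[A] c) ∈ Zsub (rhoT ρ N) q) ∧
    -- ... and coboundary-tensors to coboundaries
    (∀ (b : ↥(BZ ρ q)) (c : N),
      IsCoboundary (rhoT ρ N) q
        (fun x => (((b : ↥(Zsub ρ q)) : (Fin q → G) → M) x) ⊗ₜ[A] c)) ∧
    -- surjectivity modulo coboundaries
    (∀ F : (Fin q → G) → (M ⊗[A] N), IsLocallyConstant F → dFun (rhoT ρ N) q F = 0 →
      ∃ (k : ℕ) (z : Fin k → ↥(Zsub ρ q)) (c : Fin k → N),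
        IsCoboundary (rhoT ρ N) q
          (F - fun x => ∑ j, ((z j : (Fin q → G) → M) x) ⊗ₜ[A] c j)) ∧
    -- injectivity
    (∀ (k : ℕ) (z : Fin k → ↥(Zsub ρ q)) (c : Fin k → N),
      IsCoboundary (rhoT ρ N) q
        (fun x => ∑ j, ((z j : (Fin q → G) → M) x) ⊗ₜ[A] c j) →
      (∑ j, (z j) ⊗ₜ[A] (c j)) ∈
        LinearMap.range (TensorProduct.map (Submodule.subtype (BZ ρ q))
          (LinearMap.id (M := N)))) :=
  statement6_general A G M ρ hdisc N q
end
end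

section
/- Let A be a commutative Z_(p)-algebra, n ≥ 1. The ghost-component ring homomorphism Φ_{n+1}: W_{n+1}(A/p^n A) → A/p^n A, (x_1,...,x_{n+1}) ↦ x_1^{p^n} + p x_2^{p^{n-1}} + ... + p^n x_{n+1}, vanishes on V^n(A/p^n A) and on W_n(pA/p^n A), and thus factors through a ring homomorphism θ_n: W_n(A/pA) → A/p^n A given by (x_1,...,x_n) ↦ x̃_1^{p^n} + p x̃_2^{p^{n-1}} + ... + p^{n-1} x̃_n^p for any lifts x̃_i. -/
/-!
Modulo `pⁿ` the term `pⁱ xᵢ^{p^{n-i}}` of `Φ_{n+1}` vanishes for `i = n`, and for `i < n` as soon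
as `p ∣ xᵢ`, because `n ≤ i + p^{n-i}`. Hence `Φ_{n+1}` kills `Vⁿ` and `W_n(pA/pⁿA)`, i.e. the kernel
of the surjection `W(A/pⁿA) → W_n(A/pA)`, so it factors uniquely through it; evaluating on a lift
of `(x̃ᵢ mod p)` gives the coordinate formula.
-/

open Function

theorem RingHom.existsUnique_comp_eq_of_surjective {A B C : Type*} [Ring A] [Ring B] [Ring C]
    {f : A →+* B} (hf : Surjective f) {g : A →+* C} (hg : RingHom.ker f ≤ RingHom.ker g) :
    ∃! θ : B →+* C, ∀ x, θ (f x) = g x :=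
  ⟨f.liftOfSurjective hf ⟨g, hg⟩, f.liftOfSurjective_comp_apply hf ⟨g, hg⟩, fun _ hθ =>
    f.eq_liftOfSurjective hf g hg _ (RingHom.ext hθ)⟩

namespace WittVector

variable {p : ℕ} [Fact p.Prime] {R S : Type*} [CommRing R] [CommRing S] {n : ℕ}

theorem ghostComponent_eq_sum_of_pow_eq_zero (hpn : (p : R) ^ n = 0) (x : WittVector p R) :
    ghostComponent n x = ∑ i : Fin n, (p : R) ^ (i : ℕ) * x.coeff i ^ p ^ (n - i) := by
  rw [ghostComponent_apply, aeval_wittPolynomial, Finset.sum_range_succ, hpn, zero_mul, add_zero,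
    Fin.sum_univ_eq_sum_range (fun i => (p : R) ^ i * x.coeff i ^ p ^ (n - i))]

theorem ghostComponent_eq_zero_of_coeff_mem_span (hpn : (p : R) ^ n = 0) {x : WittVector p R}
    (hx : ∀ i < n, x.coeff i ∈ Ideal.span {(p : R)}) : ghostComponent n x = 0 := by
  rw [ghostComponent_eq_sum_of_pow_eq_zero hpn]
  refine Finset.sum_eq_zero fun i _ => ?_
  obtain ⟨a, ha⟩ := Ideal.mem_span_singleton'.1 (hx i i.isLt)
  have hle : n ≤ i + p ^ (n - i) := by
    have := (Nat.lt_pow_self (n := n - i) (Fact.out : p.Prime).one_lt).le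
    omega
  rw [← ha, mul_pow, mul_left_comm, ← pow_add, ← Nat.sub_add_cancel hle, pow_add, hpn,
    mul_zero, mul_zero]

theorem ker_truncate_comp_map_le_ker_ghostComponent (hpn : (p : R) ^ n = 0) {π : R →+* S}
    (hπ : RingHom.ker π ≤ Ideal.span {(p : R)}) :
    RingHom.ker ((truncate n).comp (map π)) ≤ RingHom.ker (ghostComponent (p := p) n) := by
  intro x hx
  rw [RingHom.mem_ker, RingHom.comp_apply, ← RingHom.mem_ker, mem_ker_truncate] at hx
  exact ghostComponent_eq_zero_of_coeff_mem_span hpn fun i hi => hπ (by simpa using hx i hi)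

end WittVector

theorem statement7 (p : ℕ) [hp : Fact p.Prime] (n : ℕ) (hn : 1 ≤ n)
    (A : Type*) [CommRing A] :
    -- `Φ_{n+1}` vanishes on `Vⁿ(A/pⁿA)` ...
    (∀ x : WittVector p (A ⧸ Ideal.span {(p : A) ^ n}),
      WittVector.ghostComponent n ((WittVector.verschiebung)^[n] x) = 0) ∧
    -- ... and on `W_n(pA/pⁿA)` ...
    (∀ x : WittVector p (A ⧸ Ideal.span {(p : A) ^ n}),
      (∀ i : ℕ, i < n →
        x.coeff i ∈ Ideal.span {Ideal.Quotient.mk (Ideal.span {(p : A) ^ n}) (p : A)}) →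
      WittVector.ghostComponent n x = 0) ∧
    -- ... and thus factors through a unique ring homomorphism `θ_n : W_n(A/pA) → A/pⁿA`,
    -- given on coordinates by the formula with lifts.
    (∃! θ : TruncatedWittVector p n (A ⧸ Ideal.span {(p : A)}) →+* A ⧸ Ideal.span {(p : A) ^ n},
      (∀ x : WittVector p (A ⧸ Ideal.span {(p : A) ^ n}),
        θ (WittVector.truncate n (WittVector.map
            (Ideal.Quotient.factor
              (Ideal.span_singleton_le_span_singleton.2 (dvd_pow_self (p : A) (by omega)))) x))
          = WittVector.ghostComponent n x) ∧
      (∀ c : Fin n → A,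
        θ (TruncatedWittVector.mk p fun i => Ideal.Quotient.mk (Ideal.span {(p : A)}) (c i))
          = Ideal.Quotient.mk (Ideal.span {(p : A) ^ n})
              (∑ i : Fin n, (p : A) ^ (i : ℕ) * (c i) ^ p ^ (n - (i : ℕ))))) := by
  set I := Ideal.span {(p : A) ^ n}
  have hpn : ((p : ℕ) : A ⧸ I) ^ n = 0 := by
    rw [← map_natCast (Ideal.Quotient.mk I), ← map_pow, Ideal.Quotient.eq_zero_iff_mem]
    exact Ideal.mem_span_singleton_self _
  have hIJ : I ≤ Ideal.span {(p : A)} :=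
    Ideal.span_singleton_le_span_singleton.2 (dvd_pow_self (p : A) (by omega))
  set π := Ideal.Quotient.factor hIJ
  have hπ : RingHom.ker π ≤ Ideal.span {((p : ℕ) : A ⧸ I)} := by
    rw [Ideal.Quotient.factor_ker, Ideal.map_span, Set.image_singleton, map_natCast]
  have hf : Surjective ((WittVector.truncate n).comp (WittVector.map π)) :=
    (WittVector.truncate_surjective p n _).comp
      (WittVector.map_surjective π (Ideal.Quotient.factor_surjective hIJ))
  obtain ⟨θ, hθ, hθ_unique⟩ := RingHom.existsUnique_comp_eq_of_surjective hf
    (WittVector.ker_truncate_comp_map_le_ker_ghostComponent hpn hπ)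
  refine ⟨fun x => WittVector.ghostComponent_eq_zero_of_coeff_mem_span hpn fun i hi => ?_,
    fun x hx => WittVector.ghostComponent_eq_zero_of_coeff_mem_span hpn (by simpa using hx),
    θ, ⟨hθ, fun c => ?_⟩, fun θ' hθ' => hθ_unique θ' hθ'.1⟩
  · rw [WittVector.iterate_verschiebung_coeff_eq_zero x hi]
    exact zero_mem _
  · let x := WittVector.mk p fun i => if h : i < n then Ideal.Quotient.mk I (c ⟨i, h⟩) else 0
    have hx : (WittVector.truncate n).comp (WittVector.map π) x =
        TruncatedWittVector.mk p fun i => Ideal.Quotient.mk (Ideal.span {(p : A)}) (c i) := by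
      ext i
      simp [x, π, WittVector.map_coeff]
    rw [← hx, hθ, WittVector.ghostComponent_eq_sum_of_pow_eq_zero hpn]
    simp [x, I]
end

section
/- Let A be a commutative Z_(p)-algebra satisfying: (i) A is Z_(p)-flat; (ii) A is integrally closed in A[1/p]; (iii) the absolute Frobenius of A/pA is surjective; (iv) there is a sequence (p_m)_{m≥0} in A with p_0 = p and p_{m+1}^p = p_m. Let p̲ ∈ R_A = lim_{x↦x^p} A/pA be the element induced by (p_m) and set ξ = [p̲] − p ∈ W(R_A). Then the sequence 0 → W(R_A) → W(R_A) → Â → 0 is exact, where the first map is multiplication by ξ and the second is Fontaine's homomorphism θ. -/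
/-!
`θ` kills `ξ`: since `[p̲] = [p̲^{1/p^n}]^{p^n}` and `θ [p̲^{1/p^n}] ≡ p_n` modulo `p`, we get
`θ [p̲] ≡ p_n^{p^n} = p` modulo `p^{n+1}` for every `n`.

Since `W(R_A)` and `Â` are `p`-adically complete, the two remaining exactness statements at `Â`
and in the middle reduce to statements modulo `p`. Modulo `p`, `θ` is `x ↦ x^{(0)}`, which is
surjective because Frobenius is surjective on `A/pA`; and `ker θ ⊆ (ξ) + p · ker θ` because the
kernel of `x ↦ x^{(0)}` on `R_A` is generated by `p̲`. This is where integral closedness enters: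
if `a` lifts `x^{(m)}` and `x^{(0)} = 0`, then `a^{p^m} ∈ pA`, so `a / p_m` is integral over `A`
and `p_m ∣ a`.

Finally `ξ` is a non-zero-divisor because its zeroth coordinate `p̲` is one in `R_A`, again by
`p`-torsion-freeness of `A`.
-/

open Ideal nonZeroDivisors WittVector

namespace WittVector

variable {p : ℕ} [Fact p.Prime] {R : Type*} [CommRing R] [CharP R p]

theorem mem_nonZeroDivisors_of_coeff_zero_mem {x : WittVector p R} (hx : x.coeff 0 ∈ R⁰) :
    x ∈ (WittVector p R)⁰ := by
  refine mem_nonZeroDivisors_iff_left.mpr fun w hw => ?_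
  by_contra hw0
  obtain ⟨n, w', hw'0, rfl⟩ := verschiebung_nonzero hw0
  have hcoeff := iterate_verschiebung_mul_coeff x w' 0 n
  rw [Function.iterate_zero_apply, zero_add, hw, zero_coeff, pow_zero, pow_one] at hcoeff
  exact hw'0 (mem_nonZeroDivisors_iff_left.mp (pow_mem hx _) _ hcoeff.symm)

theorem exists_eq_teichmuller_coeff_zero_add_p_mul [PerfectRing R p] (x : WittVector p R) :
    ∃ u, x = teichmuller p (x.coeff 0) + p * u := by
  have hmem : x - teichmuller p (x.coeff 0) ∈ span {(p : WittVector p R)} := by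
    rw [mem_span_p_iff_coeff_zero_eq_zero, ← constantCoeff_apply, map_sub, constantCoeff_apply,
      constantCoeff_apply, teichmuller_coeff_zero, sub_self]
  obtain ⟨u, hu⟩ := mem_span_singleton.mp hmem
  exact ⟨u, by rw [← hu, add_sub_cancel]⟩

theorem teichmuller_sub_p_mem_nonZeroDivisors {r : R} (hr : r ∈ R⁰) :
    teichmuller p r - p ∈ (WittVector p R)⁰ := by
  refine mem_nonZeroDivisors_of_coeff_zero_mem ?_
  rwa [← constantCoeff_apply, map_sub, constantCoeff_apply, constantCoeff_apply,
    teichmuller_coeff_zero, coeff_p_zero, sub_zero]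

end WittVector

theorem IsHausdorff.eq_zero_of_forall_pow_dvd {R : Type*} [CommRing R] {r x : R}
    (h : IsHausdorff (span {r}) R) (hx : ∀ n, r ^ n ∣ x) : x = 0 :=
  h.haus x fun n => by
    rw [SModEq.zero, smul_eq_mul, mul_top, span_singleton_pow, mem_span_singleton]
    exact hx n

instance IsHausdorff.submodule {R M : Type*} [CommRing R] [AddCommGroup M] [Module R M]
    {I : Ideal R} [IsHausdorff I M] (N : Submodule R M) : IsHausdorff I N := by
  refine isHausdorff_iff.mpr fun x hx => Subtype.ext (IsHausdorff.haus ‹_› _ fun n => ?_)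
  have hmap := Submodule.mem_map_of_mem (f := N.subtype) (SModEq.zero.mp (hx n))
  rw [Submodule.map_smul''] at hmap
  exact SModEq.zero.mpr (Submodule.smul_mono le_rfl le_top hmap)

theorem Ideal.eq_span_singleton_of_le_span_sup_mul {R : Type*} [CommRing R] {π ξ : R}
    [IsAdicComplete (span {π}) R] {J : Ideal R} (hξ : ξ ∈ J)
    (hJ : J ≤ span {ξ} ⊔ span {π} * J) : J = span {ξ} := by
  refine le_antisymm (fun v hv => ?_) ((span_singleton_le_iff_mem J).mpr hξ)
  let f : R →ₗ[R] J := (LinearMap.mulLeft R ξ).codRestrict J fun w => J.mul_mem_right w hξ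
  have hf : Function.Surjective ((span {π} • ⊤ : Submodule R J).mkQ ∘ₗ f) := by
    intro v
    obtain ⟨⟨v, hv⟩, rfl⟩ := Submodule.mkQ_surjective _ v
    obtain ⟨_, hy, w, hw, rfl⟩ := Submodule.mem_sup.mp (hJ hv)
    obtain ⟨y, rfl⟩ := mem_span_singleton.mp hy
    obtain ⟨v', hv', rfl⟩ := mem_span_singleton_mul.mp hw
    refine ⟨y, (Submodule.Quotient.eq _).mpr ?_⟩
    have : f y - ⟨ξ * y + π * v', hv⟩ = π • -⟨v', hv'⟩ :=
      Subtype.ext (show ξ * y - (ξ * y + π * v') = π * -v' by ring)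
    rw [this]
    exact Submodule.smul_mem_smul (mem_span_singleton_self π) Submodule.mem_top
  obtain ⟨y, hy⟩ := surjective_of_mkQ_comp_surjective hf ⟨v, hv⟩
  exact mem_span_singleton'.mpr ⟨y, by rw [mul_comm]; exact congrArg Subtype.val hy⟩

section IntegralClosure

variable {A : Type*} [CommRing A] {q π a : A}

theorem mem_nonZeroDivisors_of_pow_mem {N : ℕ} (hN : N ≠ 0) (h : π ^ N ∈ A⁰) : π ∈ A⁰ := by
  obtain ⟨k, rfl⟩ := Nat.exists_eq_succ_of_ne_zero hN
  exact (mul_mem_nonZeroDivisors.mp (pow_succ π k ▸ h)).2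

theorem dvd_of_pow_mem_span_of_pow_eq (hq : q ∈ A⁰)
    (hic : ∀ x : Localization.Away q, IsIntegral A x →
      ∃ a : A, algebraMap A (Localization.Away q) a = x)
    {N : ℕ} (hN : N ≠ 0) (hπ : π ^ N = q) (ha : a ^ N ∈ span {q}) : π ∣ a := by
  set φ := algebraMap A (Localization.Away q)
  have hφ : Function.Injective φ := IsLocalization.injective _ (Submonoid.powers_le.mpr hq)
  have hπunit : IsUnit (φ π) :=
    (isUnit_pow_iff hN).mp (by rw [← map_pow, hπ]; exact IsLocalization.Away.algebraMap_isUnit q)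
  obtain ⟨b, hb⟩ := mem_span_singleton'.mp ha
  set t := ↑hπunit.unit⁻¹ * φ a
  have hπt : φ π * t = φ a := by rw [← mul_assoc, hπunit.mul_val_inv, one_mul]
  have htN : t ^ N = φ b := by
    refine (hπunit.pow N).mul_left_cancel ?_
    rw [← mul_pow, hπt, ← map_pow, ← map_pow, ← hb, hπ, map_mul, mul_comm]
  obtain ⟨z, hz⟩ := hic t (.of_pow (Nat.pos_of_ne_zero hN) (htN ▸ isIntegral_algebraMap))
  exact ⟨z, hφ (by rw [map_mul, hz, hπt])⟩

theorem pow_mem_span_of_mul_mem_span (hq : q ∈ A⁰) {k n : ℕ} (hπ : π ^ (k + 1) = q)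
    (hkn : k + 1 ≤ n * k) (h : π * a ∈ span {q}) : a ^ n ∈ span {q} := by
  obtain ⟨b, hb⟩ := mem_span_singleton'.mp h
  have hπ0 : π ∈ A⁰ := mem_nonZeroDivisors_of_pow_mem k.succ_ne_zero (hπ ▸ hq)
  have ha : a = π ^ k * b :=
    sub_eq_zero.mp (mem_nonZeroDivisors_iff_left.mp hπ0 _ (by rw [mul_sub, ← hb, ← hπ]; ring))
  rw [ha, mul_pow, ← pow_mul, mem_span_singleton, ← hπ, mul_comm k]
  exact (pow_dvd_pow π hkn).mul_right _

end IntegralClosure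

namespace Perfection

variable {R : Type*} [CommRing R] {p : ℕ} [Fact p.Prime] [CharP R p] {ϖ : Perfection R p}

theorem mem_nonZeroDivisors_of_forall_coeff_mul_eq_zero
    (hϖ : ∀ m (u : R), coeff R p (m + 1) ϖ * u = 0 → u ^ p = 0) : ϖ ∈ (Perfection R p)⁰ := by
  refine mem_nonZeroDivisors_iff_left.mpr fun x hx => ext fun m => ?_
  have hm := congrArg (coeff R p (m + 1)) hx
  rw [map_mul, map_zero] at hm
  rw [← coeff_pow_p', hϖ m _ hm, map_zero]

theorem dvd_of_forall_coeff_dvd (hϖ : ∀ m (u : R), coeff R p (m + 1) ϖ * u = 0 → u ^ p = 0)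
    {x : Perfection R p} (hx : ∀ m, coeff R p m ϖ ∣ coeff R p m x) : ϖ ∣ x := by
  choose z hz using hx
  -- `z m` is only determined up to the annihilator of `coeff m ϖ`, which `hϖ` says `· ^ p` kills
  have hcompat : ∀ m, (z (m + 2) ^ p) ^ p = z (m + 1) ^ p := fun m => by
    have hdiff : coeff R p (m + 1) ϖ * (z (m + 2) ^ p - z (m + 1)) = 0 := by
      rw [mul_sub, ← hz, ← coeff_pow_p' ϖ (m + 1), ← mul_pow, ← hz, coeff_pow_p', sub_self]
    rw [← sub_eq_zero, ← sub_pow_char, hϖ m _ hdiff]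
  obtain ⟨y, hy⟩ : ∃ y : Perfection R p, ∀ m, coeff R p m y = z (m + 1) ^ p :=
    ⟨⟨_, hcompat⟩, fun _ => rfl⟩
  refine ⟨y, ext fun m => ?_⟩
  rw [map_mul, hy, ← coeff_pow_p' ϖ m, ← mul_pow, ← hz, coeff_pow_p']

end Perfection

section Tilt

variable {p : ℕ} {A : Type*} [CommRing A] {pseq : ℕ → A}

theorem pseq_pow_p_pow (hp0 : pseq 0 = p) (hpsucc : ∀ m, pseq (m + 1) ^ p = pseq m)
    (m : ℕ) : pseq m ^ p ^ m = p := by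
  induction m with
  | zero => rwa [pow_zero, pow_one]
  | succ m ih => rw [pow_succ', pow_mul, hpsucc, ih]

variable [Fact p.Prime] [CharP (A ⧸ span {(p : A)}) p] {pu : Perfection (A ⧸ span {(p : A)}) p}

theorem pow_eq_zero_of_coeff_succ_mul_eq_zero (hpA : (p : A) ∈ A⁰) (hp0 : pseq 0 = p)
    (hpsucc : ∀ m, pseq (m + 1) ^ p = pseq m)
    (hpu : ∀ m, Perfection.coeff _ p m pu = Ideal.Quotient.mk _ (pseq m))
    (m : ℕ) (u : A ⧸ span {(p : A)}) (hu : Perfection.coeff _ p (m + 1) pu * u = 0) :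
    u ^ p = 0 := by
  obtain ⟨a, rfl⟩ := Ideal.Quotient.mk_surjective u
  rw [hpu, ← map_mul, Ideal.Quotient.eq_zero_iff_mem] at hu
  rw [← map_pow, Ideal.Quotient.eq_zero_iff_mem]
  have hp2 := (Fact.out : p.Prime).two_le
  have hle : p ≤ p ^ (m + 1) := Nat.le_self_pow m.succ_ne_zero p
  refine pow_mem_span_of_mul_mem_span hpA (k := p ^ (m + 1) - 1) ?_ ?_ hu
  · rw [Nat.sub_add_cancel (by omega), pseq_pow_p_pow hp0 hpsucc]
  · have : p ^ (m + 1) + p ≤ p * p ^ (m + 1) := by nlinarith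
    rw [Nat.mul_sub, mul_one]
    omega

theorem pu_mem_nonZeroDivisors (hpA : (p : A) ∈ A⁰) (hp0 : pseq 0 = p)
    (hpsucc : ∀ m, pseq (m + 1) ^ p = pseq m)
    (hpu : ∀ m, Perfection.coeff _ p m pu = Ideal.Quotient.mk _ (pseq m)) :
    pu ∈ (Perfection (A ⧸ span {(p : A)}) p)⁰ :=
  Perfection.mem_nonZeroDivisors_of_forall_coeff_mul_eq_zero
    (pow_eq_zero_of_coeff_succ_mul_eq_zero hpA hp0 hpsucc hpu)

theorem pu_dvd_of_coeff_zero_eq_zero (hpA : (p : A) ∈ A⁰)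
    (hic : ∀ x : Localization.Away (p : A), IsIntegral A x →
      ∃ a : A, algebraMap A (Localization.Away (p : A)) a = x)
    (hp0 : pseq 0 = p) (hpsucc : ∀ m, pseq (m + 1) ^ p = pseq m)
    (hpu : ∀ m, Perfection.coeff _ p m pu = Ideal.Quotient.mk _ (pseq m))
    {x : Perfection (A ⧸ span {(p : A)}) p} (hx : Perfection.coeff _ p 0 x = 0) : pu ∣ x := by
  refine Perfection.dvd_of_forall_coeff_dvd
    (pow_eq_zero_of_coeff_succ_mul_eq_zero hpA hp0 hpsucc hpu) fun m => ?_
  obtain ⟨a, ha⟩ := Ideal.Quotient.mk_surjective (Perfection.coeff _ p m x)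
  have hapow : a ^ p ^ m ∈ span {(p : A)} := by
    rw [← Ideal.Quotient.eq_zero_iff_mem, map_pow, ha, ← hx]
    exact Perfection.coeffMonoidHom_pow_p_pow_self x m
  rw [hpu, ← ha]
  exact map_dvd _ (dvd_of_pow_mem_span_of_pow_eq hpA hic
    (pow_ne_zero m (Fact.out : p.Prime).ne_zero) (pseq_pow_p_pow hp0 hpsucc m) hapow)

end Tilt

theorem natCast_mem_nonZeroDivisors_of_completion {p : ℕ} {A Ahat : Type*} [CommRing A]
    [CommRing Ahat] (c : A →+* Ahat) (hpA : (p : A) ∈ A⁰)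
    (hsep : IsHausdorff (span {(p : Ahat)}) Ahat)
    (hdense : ∀ y : Ahat, ∀ n : ℕ, ∃ x : A, y - c x ∈ span {(p : Ahat) ^ n})
    (hisom : ∀ (x : A) (n : ℕ), c x ∈ span {(p : Ahat) ^ n} → x ∈ span {(p : A) ^ n}) :
    (p : Ahat) ∈ Ahat⁰ := by
  refine mem_nonZeroDivisors_iff_left.mpr fun y hy => hsep.eq_zero_of_forall_pow_dvd fun n => ?_
  -- approximating `y` by `c x` modulo `p ^ n`, `c (p * x) ≡ -p * y = 0` modulo `p ^ (n + 1)`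
  obtain ⟨x, hx⟩ := hdense y n
  obtain ⟨u, hu⟩ := mem_span_singleton'.mp hx
  have hcpx : c (p * x) ∈ span {(p : Ahat) ^ (n + 1)} :=
    mem_span_singleton'.mpr
      ⟨-u, by rw [map_mul, map_natCast]; linear_combination -(p : Ahat) * hu - hy⟩
  obtain ⟨d, hd⟩ := mem_span_singleton'.mp (hisom _ _ hcpx)
  have hxd : x = d * p ^ n :=
    sub_eq_zero.mp (mem_nonZeroDivisors_iff_left.mp hpA _ (by linear_combination -hd))
  exact ⟨c d + u, by rw [hxd, map_mul, map_pow, map_natCast] at hu; linear_combination -hu⟩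

section Theta

variable {p : ℕ} [Fact p.Prime] {A Ahat : Type*} [CommRing A] [CommRing Ahat]
  [CharP (A ⧸ span {(p : A)}) p] {c : A →+* Ahat}
  {θ : WittVector p (Perfection (A ⧸ span {(p : A)}) p) →+* Ahat}

theorem theta_sub_mem_span
    (hθ : ∀ r a, Ideal.Quotient.mk _ a = Perfection.coeff _ p 0 r →
      θ (teichmuller p r) - c a ∈ span {(p : Ahat)})
    (x : WittVector p (Perfection (A ⧸ span {(p : A)}) p)) (a : A)
    (ha : Ideal.Quotient.mk _ a = Perfection.coeff _ p 0 (x.coeff 0)) :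
    θ x - c a ∈ span {(p : Ahat)} := by
  obtain ⟨u, hu⟩ := exists_eq_teichmuller_coeff_zero_add_p_mul x
  have hsplit : θ x - c a = (θ (teichmuller p (x.coeff 0)) - c a) + p * θ u := by
    rw [hu, map_add, map_mul, map_natCast, ← hu]; ring
  rw [hsplit]
  exact add_mem (hθ _ a ha) (mul_mem_right _ _ (mem_span_singleton_self _))

theorem theta_teichmuller_pu {pseq : ℕ → A} {pu : Perfection (A ⧸ span {(p : A)}) p}
    (hsep : IsHausdorff (span {(p : Ahat)}) Ahat)
    (hθ : ∀ r a, Ideal.Quotient.mk _ a = Perfection.coeff _ p 0 r →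
      θ (teichmuller p r) - c a ∈ span {(p : Ahat)})
    (hp0 : pseq 0 = p) (hpsucc : ∀ m, pseq (m + 1) ^ p = pseq m)
    (hpu : ∀ m, Perfection.coeff _ p m pu = Ideal.Quotient.mk _ (pseq m)) :
    θ (teichmuller p pu) = p := by
  refine sub_eq_zero.mp (hsep.eq_zero_of_forall_pow_dvd fun n => ?_)
  cases n with
  | zero => exact pow_zero (p : Ahat) ▸ one_dvd _
  | succ n =>
    -- `[pu] = [pu ^ (1 / p ^ n)] ^ p ^ n`, and `θ [pu ^ (1 / p ^ n)] ≡ pseq n` modulo `p`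
    set r := (frobeniusEquiv _ p).symm^[n] pu
    have hr : θ (teichmuller p r) - c (pseq n) ∈ span {(p : Ahat)} :=
      hθ r _ (by rw [Perfection.coeff_iterate_symm_frobeniusEquiv, zero_add, hpu])
    have h := dvd_sub_pow_of_dvd_sub (mem_span_singleton.mp hr) n
    rwa [← map_pow, ← map_pow, iterate_frobeniusEquiv_symm_pow_p_pow, ← map_pow,
      pseq_pow_p_pow hp0 hpsucc, map_natCast] at h

theorem theta_surjective (hsep : IsHausdorff (span {(p : Ahat)}) Ahat)
    (hfrob : Function.Surjective (frobenius (A ⧸ span {(p : A)}) p))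
    (hdense : ∀ y : Ahat, ∃ x : A, y - c x ∈ span {(p : Ahat)})
    (hθ : ∀ r a, Ideal.Quotient.mk _ a = Perfection.coeff _ p 0 r →
      θ (teichmuller p r) - c a ∈ span {(p : Ahat)}) :
    Function.Surjective θ := by
  have hmap : (span {(p : WittVector p (Perfection (A ⧸ span {(p : A)}) p))}).map θ =
      span {(p : Ahat)} := by
    rw [map_span, Set.image_singleton, map_natCast]
  have : IsHausdorff ((span {(p : WittVector p _)}).map θ) Ahat := hmap ▸ hsep
  refine surjective_of_mk_map_comp_surjective θ (I := span {(p : WittVector p _)}) fun y => ?_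
  obtain ⟨y, rfl⟩ := Ideal.Quotient.mk_surjective y
  obtain ⟨a, ha⟩ := hdense y
  obtain ⟨r, hr⟩ := Perfection.coeff_surjective hfrob 0 (Ideal.Quotient.mk _ a)
  refine ⟨teichmuller p r, ?_⟩
  rw [RingHom.comp_apply, hmap, Ideal.Quotient.eq]
  simpa using sub_mem (hθ r a hr.symm) ha

theorem coeff_zero_coeff_zero_eq_zero_of_theta_mem_span
    (hθ : ∀ r a, Ideal.Quotient.mk _ a = Perfection.coeff _ p 0 r →
      θ (teichmuller p r) - c a ∈ span {(p : Ahat)})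
    (hisom : ∀ x : A, c x ∈ span {(p : Ahat)} → x ∈ span {(p : A)})
    {v : WittVector p (Perfection (A ⧸ span {(p : A)}) p)} (hv : θ v ∈ span {(p : Ahat)}) :
    Perfection.coeff _ p 0 (v.coeff 0) = 0 := by
  obtain ⟨a, ha⟩ := Ideal.Quotient.mk_surjective (Perfection.coeff _ p 0 (v.coeff 0))
  rw [← ha, Ideal.Quotient.eq_zero_iff_mem]
  exact hisom a (by simpa using sub_mem hv (theta_sub_mem_span hθ v a ha))

theorem ker_theta_le_span_sup_mul {pu : Perfection (A ⧸ span {(p : A)}) p}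
    (hθ : ∀ r a, Ideal.Quotient.mk _ a = Perfection.coeff _ p 0 r →
      θ (teichmuller p r) - c a ∈ span {(p : Ahat)})
    (hisom : ∀ x : A, c x ∈ span {(p : Ahat)} → x ∈ span {(p : A)})
    (hker : ∀ x, Perfection.coeff _ p 0 x = 0 → pu ∣ x)
    (hpAhat : (p : Ahat) ∈ Ahat⁰) (hθpu : θ (teichmuller p pu) = p) :
    RingHom.ker θ ≤ span {teichmuller p pu - p} ⊔ span {(p : WittVector p _)} * RingHom.ker θ := by
  intro v hv
  rw [RingHom.mem_ker] at hv
  obtain ⟨y, hy⟩ :=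
    hker _ (coeff_zero_coeff_zero_eq_zero_of_theta_mem_span hθ hisom (hv ▸ zero_mem _))
  obtain ⟨u, hu⟩ := exists_eq_teichmuller_coeff_zero_add_p_mul v
  have hv_eq : v = (teichmuller p pu - p) * teichmuller p y + p * (teichmuller p y + u) := by
    rw [hu, hy, map_mul]; ring
  have hθv' : θ (teichmuller p y + u) = 0 := by
    have h := congrArg θ hv_eq
    rw [hv, map_add, map_mul, map_mul, map_sub, hθpu, map_natCast, sub_self, zero_mul,
      zero_add] at h
    exact mem_nonZeroDivisors_iff_left.mp hpAhat _ h.symm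
  rw [hv_eq]
  exact Submodule.add_mem_sup (mul_mem_right _ _ (mem_span_singleton_self _))
    (mem_span_singleton_mul.mpr ⟨_, hθv', rfl⟩)

end Theta

theorem statement8 (p : ℕ) [hp : Fact p.Prime]
    (A : Type*) [CommRing A]
    -- ... (i) which is `ℤ_(p)`-flat ...
    (hflat : ∀ x : A, (p : A) * x = 0 → x = 0)
    -- ... (ii) integrally closed in `A[1/p]` ...
    (hic : ∀ x : Localization.Away (p : A), IsIntegral A x →
      ∃ a : A, algebraMap A (Localization.Away (p : A)) a = x)
    -- ... (iii) with surjective Frobenius on `A/pA` ...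
    [CharP (A ⧸ Ideal.span {(p : A)}) p]
    (hfrob : ∀ y : A ⧸ Ideal.span {(p : A)}, ∃ x, x ^ p = y)
    -- ... (iv) and equipped with a compatible system of `p`-power roots of `p`
    (pseq : ℕ → A) (hp0 : pseq 0 = (p : A))
    (hpsucc : ∀ m : ℕ, pseq (m + 1) ^ p = pseq m)
    -- `Â` : the `p`-adic completion of `A`
    (Ahat : Type*) [CommRing Ahat] (c : A →+* Ahat)
    (hcomplete : IsAdicComplete (Ideal.span {(p : Ahat)}) Ahat)
    (hdense : ∀ y : Ahat, ∀ n : ℕ, ∃ x : A, y - c x ∈ Ideal.span {(p : Ahat) ^ n})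
    (hisom : ∀ (x : A) (n : ℕ), c x ∈ Ideal.span {(p : Ahat) ^ n} →
      x ∈ Ideal.span {(p : A) ^ n})
    -- `θ` : Fontaine's homomorphism `W(R_A) → Â`, characterized on Teichmüller lifts
    (θ : WittVector p (Perfection (A ⧸ Ideal.span {(p : A)}) p) →+* Ahat)
    (hθ : ∀ r : Perfection (A ⧸ Ideal.span {(p : A)}) p,
      Ideal.Quotient.mk (Ideal.span {(p : Ahat)}) (θ (WittVector.teichmuller p r)) =
        Ideal.quotientMap (Ideal.span {(p : Ahat)}) c
          (by
            intro x hx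
            rw [Ideal.mem_comap]
            rw [Ideal.mem_span_singleton] at hx ⊢
            obtain ⟨y, rfl⟩ := hx
            exact ⟨c y, by rw [map_mul, map_natCast]⟩)
          (Perfection.coeff (A ⧸ Ideal.span {(p : A)}) p 0 r))
    -- `p̲ ∈ R_A`, the element induced by the sequence `(p_m)`
    (pu : Perfection (A ⧸ Ideal.span {(p : A)}) p)
    (hpu : ∀ m : ℕ, Perfection.coeff (A ⧸ Ideal.span {(p : A)}) p m pu =
      Ideal.Quotient.mk (Ideal.span {(p : A)}) (pseq m)) :
    -- the sequence `0 → W(R_A) --·ξ--> W(R_A) --θ--> Â → 0` is exact, where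
    -- `ξ = [p̲] - p` :
    Function.Injective (fun w : WittVector p (Perfection (A ⧸ Ideal.span {(p : A)}) p)
      => (WittVector.teichmuller p pu - (p : WittVector p _)) * w) ∧
    (∀ w : WittVector p (Perfection (A ⧸ Ideal.span {(p : A)}) p),
      θ w = 0 ↔ ∃ x, (WittVector.teichmuller p pu - (p : WittVector p _)) * x = w) ∧
    Function.Surjective θ := by
  have hpA : (p : A) ∈ A⁰ := mem_nonZeroDivisors_iff_left.mpr hflat
  have hsep := hcomplete.toIsHausdorff
  have hθ' : ∀ r a, Ideal.Quotient.mk _ a = Perfection.coeff _ p 0 r →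
      θ (teichmuller p r) - c a ∈ span {(p : Ahat)} := fun r a ha =>
    Ideal.Quotient.eq.mp (by rw [hθ r, ← ha, Ideal.quotientMap_mk])
  have hθpu := theta_teichmuller_pu hsep hθ' hp0 hpsucc hpu
  have hker : RingHom.ker θ = span {teichmuller p pu - p} :=
    Ideal.eq_span_singleton_of_le_span_sup_mul
      (by rw [RingHom.mem_ker, map_sub, hθpu, map_natCast, sub_self])
      (ker_theta_le_span_sup_mul hθ' (fun x hx => by simpa using hisom x 1 (by simpa using hx))
        (fun _ hx => pu_dvd_of_coeff_zero_eq_zero hpA hic hp0 hpsucc hpu hx)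
        (natCast_mem_nonZeroDivisors_of_completion c hpA hsep hdense hisom) hθpu)
  have hξ : teichmuller p pu - (p : WittVector p _) ∈ (WittVector p _)⁰ :=
    teichmuller_sub_p_mem_nonZeroDivisors (pu_mem_nonZeroDivisors hpA hp0 hpsucc hpu)
  have hinj : IsLeftRegular (teichmuller p pu - (p : WittVector p _)) :=
    (isRegular_iff_mem_nonZeroDivisors.mpr hξ).left
  have hfrobenius : Function.Surjective (frobenius (A ⧸ span {(p : A)}) p) := fun y =>
    (hfrob y).imp fun x hx => by rwa [frobenius_def]
  refine ⟨hinj, fun w => ?_,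
    theta_surjective hsep hfrobenius (fun y => by simpa using hdense y 1) hθ'⟩
  rw [← RingHom.mem_ker, hker, mem_span_singleton]
  exact ⟨fun ⟨x, hx⟩ => ⟨x, hx.symm⟩, fun ⟨x, hx⟩ => ⟨x, hx.symm⟩⟩
end

section
/- With A satisfying the hypotheses of the previous statement (Z_(p)-flat, integrally closed in A[1/p], Frobenius surjective on A/pA, compatible p-power roots p_m of p up to level N), for all integers n ≥ 1 and i ≥ 0 with n + i ≤ N, setting ξ_{n+i} = [p̄_{n+i}] − p ∈ W_{n+i}(A/pA), the sequence W_n(A/pA) →(multiplication by R^i(ξ_{n+i})) W_n(A/pA) →(θ_n ∘ F^i) A/p^n A → 0 is exact. -/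
/-!
Pulled back along `W(A) → W_m(A/pA)`, the map `θ_m ∘ F^i : W_m(A/pA) → A/p^mA` is the ghost
component `w ↦ w_{m+i}` reduced mod `p^m`. In this form one reads off that it kills
`ξ = [p̄_{m+i}] - p` (because `p_{m+i}^(p^(m+i)) = p`), that it sends `V^m[ā]` to
`p^m a^(p^(i+1))`, and that reducing mod `p^m` turns `θ_{m+1} ∘ F^i` into `θ_m ∘ F^(i+1) ∘ R`. Exactness and surjectivity then follow by
induction on `m`. For exactness, after subtracting a multiple of `ξ` an element of the kernel is
`V^m[c̄]`, and `p^(m+1) ∣ p^m c^(p^(i+1))` forces `p_{i+1} = p_{m+1+i}^(p^m)` to divide `c`: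
the quotient is integral over `A` in `A[1/p]`, being a `p^(i+1)`-th root of `c^(p^(i+1))/p`.
For surjectivity, the error of a lift is corrected by some `V^m[ē]`, with `ē` a `p^(i+1)`-th root
that exists because Frobenius is surjective on `A/pA`.
-/

noncomputable section

/-- The Frobenius endomorphism of truncated Witt vectors of a ring of characteristic `p`,
given on coordinates by the `p`-th power map. -/
def truncFrobenius (p : ℕ) {k : ℕ} {R : Type*} [CommRing R]
    (x : TruncatedWittVector p k R) : TruncatedWittVector p k R :=
  TruncatedWittVector.mk p fun i => x.coeff i ^ p

namespace WittTheta

open WittVector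

section Roots

variable {M : Type*} [Monoid M]

lemma pow_pow_eq_of_pow_succ_eq {p N : ℕ} {q : M} {s : ℕ → M} (h0 : s 0 = q)
    (hsucc : ∀ m < N, s (m + 1) ^ p = s m) {m : ℕ} (hm : m ≤ N) : s m ^ p ^ m = q := by
  induction m with
  | zero => simpa using h0
  | succ m ih => rw [pow_succ', pow_mul, hsucc m hm, ih (by omega)]

lemma exists_pow_pow_eq {p : ℕ} (h : ∀ y : M, ∃ x, x ^ p = y) (k : ℕ) (y : M) :
    ∃ x, x ^ p ^ k = y := by
  induction k generalizing y with
  | zero => exact ⟨y, pow_one y⟩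
  | succ k ih =>
    obtain ⟨z, rfl⟩ := h y
    obtain ⟨x, rfl⟩ := ih z
    exact ⟨x, by rw [pow_succ, pow_mul]⟩

variable {A : Type*} [CommRing A]

lemma dvd_of_pow_eq_of_dvd_pow {q : A} (hq : q ∈ nonZeroDivisors A)
    (hic : ∀ x : Localization.Away q, IsIntegral A x →
      ∃ a : A, algebraMap A (Localization.Away q) a = x)
    {e : ℕ} (he : e ≠ 0) {r a : A} (hr : r ^ e = q) (ha : q ∣ a ^ e) : r ∣ a := by
  obtain ⟨b, hb⟩ := ha
  have hqL : IsUnit (algebraMap A (Localization.Away q) q) :=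
    IsLocalization.map_units _ ⟨q, Submonoid.mem_powers _⟩
  have hrq : algebraMap A (Localization.Away q) r ^ e = algebraMap A _ q := by
    rw [← map_pow, hr]
  have hrL : IsUnit (algebraMap A (Localization.Away q) r) :=
    (isUnit_pow_iff he).1 (hrq ▸ hqL)
  set t := algebraMap A (Localization.Away q) a * ↑hrL.unit⁻¹
  have hrt : algebraMap A _ r * t = algebraMap A _ a := by
    rw [mul_left_comm, hrL.mul_val_inv, mul_one]
  have ht : t ^ e = algebraMap A _ b :=
    hqL.mul_left_cancel (by rw [← hrq, ← mul_pow, hrt, ← map_pow, hb, map_mul, hrq])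
  obtain ⟨c, hc⟩ := hic t
    ⟨Polynomial.X ^ e - Polynomial.C b, Polynomial.monic_X_pow_sub_C b he, by simp [ht]⟩
  refine ⟨c, IsLocalization.injective (Localization.Away q) (Submonoid.powers_le.2 hq) ?_⟩
  rw [map_mul, hc, hrt]

end Roots

universe u

-- `IsPoly.map` is only available for two rings in the same universe.
lemma map_iterate_frobenius {p : ℕ} [Fact p.Prime] {R S : Type u} [CommRing R] [CommRing S]
    (f : R →+* S) (i : ℕ) (x : WittVector p R) :
    map f (frobenius^[i] x) = frobenius^[i] (map f x) :=
  (Function.Semiconj.iterate_right (fun y => frobenius_isPoly p |>.map f y) i) x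

section WittIdentities

variable {p : ℕ} [hp : Fact p.Prime] {R S : Type*} [CommRing R] [CommRing S]

lemma ghostComponent_iterate_frobenius (k i : ℕ) (x : WittVector p R) :
    ghostComponent k (frobenius^[i] x) = ghostComponent (k + i) x := by
  induction i generalizing k with
  | zero => rfl
  | succ i ih =>
    rw [Function.iterate_succ_apply', ghostComponent_frobenius, ih, Nat.add_right_comm,
      add_assoc]

lemma ghostComponent_iterate_verschiebung (k m : ℕ) (x : WittVector p R) :
    ghostComponent (k + m) (verschiebung^[m] x) = (p : R) ^ m * ghostComponent k x := by
  induction m with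
  | zero => simp
  | succ m ih =>
    rw [Function.iterate_succ_apply', ← add_assoc, ghostComponent_verschiebung, ih, pow_succ',
      mul_assoc]

lemma map_iterate_verschiebung (f : R →+* S) (m : ℕ) (x : WittVector p R) :
    map f (verschiebung^[m] x) = verschiebung^[m] (map f x) :=
  (Function.Semiconj.iterate_right (fun y => map_verschiebung f y) m) x

lemma truncFrobenius_iterate_truncate [CharP R p] (m i : ℕ) (w : WittVector p R) :
    (truncFrobenius p)^[i] (WittVector.truncate m w) =
      WittVector.truncate m (frobenius^[i] w) := by
  refine ((Function.Semiconj.iterate_right (fun v => ?_) i) w).symm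
  ext j
  simp [truncFrobenius]

lemma ghostComponent_map (f : R →+* S) (n : ℕ) (x : WittVector p R) :
    ghostComponent n (map f x) = f (ghostComponent n x) := by
  simp [ghostComponent_apply, aeval_wittPolynomial, map_coeff]

lemma truncate_iterate_verschiebung (m : ℕ) (x : WittVector p R) :
    WittVector.truncate m (verschiebung^[m] x) = 0 :=
  (mem_ker_truncate (n := m) (verschiebung^[m] x)).2 fun _ hj =>
    iterate_verschiebung_coeff_eq_zero x hj

lemma eq_truncate_iterate_verschiebung_teichmuller {m : ℕ} {z : TruncatedWittVector p (m + 1) R}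
    (hz : TruncatedWittVector.truncate m.le_succ z = 0) :
    z = WittVector.truncate (m + 1) (verschiebung^[m] (teichmuller p (z.coeff (Fin.last m)))) := by
  ext j
  rw [coeff_truncate]
  rcases (Nat.lt_succ_iff.1 j.isLt).lt_or_eq with hj | hj
  · rw [iterate_verschiebung_coeff_eq_zero _ hj]
    simpa [TruncatedWittVector.coeff_truncate] using
      congrArg (TruncatedWittVector.coeff ⟨j, hj⟩) hz
  · obtain rfl : j = Fin.last m := Fin.ext hj
    simpa using (iterate_verschiebung_coeff (teichmuller p (z.coeff (Fin.last m))) m 0).symm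

lemma iterate_frobenius_teichmuller [CharP R p] (m : ℕ) (a : R) :
    frobenius^[m] (teichmuller p a) = teichmuller p (a ^ p ^ m) := by
  ext k
  rw [iterate_frobenius_coeff]
  rcases k.eq_zero_or_pos with rfl | hk
  · simp only [teichmuller_coeff_zero]
  · simp only [teichmuller_coeff_pos _ _ k hk, zero_pow (pow_ne_zero m hp.out.ne_zero)]

lemma truncate_teichmuller_sub_mul_iterate_verschiebung [CharP R p] (m : ℕ) (a d : R) :
    WittVector.truncate (m + 1) (teichmuller p a - (p : WittVector p R)) *
        WittVector.truncate (m + 1) (verschiebung^[m] (teichmuller p d)) =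
      WittVector.truncate (m + 1) (verschiebung^[m] (teichmuller p (d * a ^ p ^ m))) := by
  have hp_mul : verschiebung^[m] (teichmuller p d) * (p : WittVector p R) =
      verschiebung^[m + 1] (frobenius (teichmuller p d)) := by
    rw [iterate_verschiebung_mul_left, Function.iterate_fixed (map_natCast _ p),
      ← verschiebung_frobenius, ← Function.iterate_succ_apply]
  rw [← map_mul, mul_comm, mul_sub, map_sub, hp_mul, truncate_iterate_verschiebung, sub_zero,
    iterate_verschiebung_mul_left, iterate_frobenius_teichmuller, ← map_mul]

end WittIdentities

section Theta

variable {p : ℕ} [hp : Fact p.Prime] {A : Type*} [CommRing A]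

local notation "π" => Ideal.Quotient.mk (Ideal.span {(p : A)})

lemma pow_dvd_ghostComponent_of_dvd_coeff {m : ℕ} (i : ℕ) {w : WittVector p A}
    (h : ∀ j < m, (p : A) ∣ w.coeff j) : (p : A) ^ m ∣ ghostComponent (m + i) w := by
  rw [ghostComponent_apply, aeval_wittPolynomial]
  refine Finset.dvd_sum fun j _ => ?_
  rcases lt_or_ge j m with hjm | hjm
  · obtain ⟨b, hb⟩ := h j hjm
    have hexp : m ≤ j + p ^ (m + i - j) := by
      have := Nat.lt_pow_self (n := m + i - j) hp.out.one_lt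
      omega
    rw [hb, mul_pow, ← mul_assoc, ← pow_add]
    exact (pow_dvd_pow _ hexp).mul_right _
  · exact (pow_dvd_pow _ hjm).mul_right _

lemma surjective_truncate_comp_map (m : ℕ) :
    Function.Surjective ((WittVector.truncate m).comp (WittVector.map π) :
      WittVector p A →+* TruncatedWittVector p m (A ⧸ Ideal.span {(p : A)})) :=
  (truncate_surjective p m _).comp (map_surjective _ Ideal.Quotient.mk_surjective)

lemma ker_truncate_comp_map_le (m i : ℕ) :
    RingHom.ker ((WittVector.truncate m).comp (WittVector.map π) :
      WittVector p A →+* TruncatedWittVector p m (A ⧸ Ideal.span {(p : A)})) ≤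
      RingHom.ker ((Ideal.Quotient.mk (Ideal.span {(p : A) ^ m})).comp
        (ghostComponent (m + i))) := by
  intro w hw
  rw [RingHom.mem_ker, RingHom.comp_apply, ← RingHom.mem_ker, mem_ker_truncate] at hw
  rw [RingHom.mem_ker, RingHom.comp_apply, Ideal.Quotient.eq_zero_iff_mem,
    Ideal.mem_span_singleton]
  refine pow_dvd_ghostComponent_of_dvd_coeff i fun j hj => ?_
  rw [← Ideal.mem_span_singleton, ← Ideal.Quotient.eq_zero_iff_mem]
  simpa using hw j hj

/-- The map `θ_m ∘ F^i : W_m(A/pA) → A/p^mA`, induced by the ghost component `w_{m+i}`. -/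
def thetaFrob (m i : ℕ) :
    TruncatedWittVector p m (A ⧸ Ideal.span {(p : A)}) →+* A ⧸ Ideal.span {(p : A) ^ m} :=
  RingHom.liftOfSurjective _ (surjective_truncate_comp_map m) ⟨_, ker_truncate_comp_map_le m i⟩

lemma thetaFrob_truncate_map (m i : ℕ) (w : WittVector p A) :
    thetaFrob m i (WittVector.truncate m (WittVector.map π w)) =
      Ideal.Quotient.mk _ (ghostComponent (m + i) w) :=
  RingHom.liftOfSurjective_comp_apply _ (surjective_truncate_comp_map m) _ w

lemma thetaFrob_truncate_iterate_verschiebung (m i : ℕ) (a : A) :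
    thetaFrob (m + 1) i (WittVector.truncate (m + 1) (verschiebung^[m] (teichmuller p (π a)))) =
      Ideal.Quotient.mk _ ((p : A) ^ m * a ^ p ^ (i + 1)) := by
  rw [← map_teichmuller, ← map_iterate_verschiebung, thetaFrob_truncate_map,
    show m + 1 + i = i + 1 + m by omega, ghostComponent_iterate_verschiebung,
    ghostComponent_teichmuller]

lemma factor_thetaFrob (m i : ℕ)
    (y : TruncatedWittVector p (m + 1) (A ⧸ Ideal.span {(p : A)})) :
    Ideal.Quotient.factor
        (Ideal.span_singleton_le_span_singleton.2 (pow_dvd_pow (p : A) m.le_succ))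
        (thetaFrob (m + 1) i y) =
      thetaFrob m (i + 1) (TruncatedWittVector.truncate m.le_succ y) := by
  obtain ⟨w, rfl⟩ := surjective_truncate_comp_map (p := p) (A := A) (m + 1) y
  rw [RingHom.comp_apply, TruncatedWittVector.truncate_wittVector_truncate,
    thetaFrob_truncate_map, thetaFrob_truncate_map, Ideal.Quotient.factor_mk, Nat.add_right_comm,
    add_assoc]

def xi (m : ℕ) (r : A) : TruncatedWittVector p m (A ⧸ Ideal.span {(p : A)}) :=
  WittVector.truncate m (teichmuller p (π r) - p)

lemma truncate_xi {m : ℕ} (r : A) :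
    TruncatedWittVector.truncate m.le_succ (xi (p := p) (m + 1) r) = xi m r :=
  TruncatedWittVector.truncate_wittVector_truncate _ _

lemma thetaFrob_xi (m i : ℕ) {r : A} (hr : r ^ p ^ (m + i) = p) :
    thetaFrob m i (xi (p := p) m r) = 0 := by
  rw [xi, ← map_teichmuller, ← map_natCast (map π), ← map_sub, thetaFrob_truncate_map,
    map_sub, ghostComponent_teichmuller, map_natCast, hr, sub_self, map_zero]

lemma thetaFrob_surjective (hfrob : ∀ y : A ⧸ Ideal.span {(p : A)}, ∃ x, x ^ p = y)
    (m i : ℕ) :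
    Function.Surjective (thetaFrob (p := p) (A := A) m i) := by
  induction m generalizing i with
  | zero =>
    intro b
    obtain ⟨a, rfl⟩ := Ideal.Quotient.mk_surjective b
    refine ⟨0, ?_⟩
    rw [map_zero, eq_comm, Ideal.Quotient.eq_zero_iff_mem, pow_zero, Ideal.span_singleton_one]
    trivial
  | succ m ih =>
    intro b
    obtain ⟨a, rfl⟩ := Ideal.Quotient.mk_surjective b
    obtain ⟨y', hy'⟩ := ih (i + 1) (Ideal.Quotient.mk _ a)
    obtain ⟨y, rfl⟩ := TruncatedWittVector.truncate_surjective m.le_succ y'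
    obtain ⟨a', ha'⟩ := Ideal.Quotient.mk_surjective (thetaFrob (m + 1) i y)
    rw [← factor_thetaFrob, ← ha', Ideal.Quotient.factor_mk,
      Ideal.Quotient.mk_eq_mk_iff_sub_mem, Ideal.mem_span_singleton] at hy'
    obtain ⟨b, hb⟩ := hy'
    obtain ⟨c, hc⟩ := exists_pow_pow_eq hfrob (i + 1) (π (-b))
    obtain ⟨e, rfl⟩ := Ideal.Quotient.mk_surjective c
    rw [← map_pow, Ideal.Quotient.mk_eq_mk_iff_sub_mem, Ideal.mem_span_singleton] at hc
    obtain ⟨t, ht⟩ := hc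
    refine ⟨y + WittVector.truncate (m + 1) (verschiebung^[m] (teichmuller p (π e))), ?_⟩
    rw [map_add, ← ha', thetaFrob_truncate_iterate_verschiebung, ← map_add,
      Ideal.Quotient.mk_eq_mk_iff_sub_mem, Ideal.mem_span_singleton]
    exact ⟨t, by linear_combination hb + (p : A) ^ m * ht⟩

lemma eq_thetaFrob_zero {n : ℕ} (hn : n ≠ 0)
    (θ : TruncatedWittVector p n (A ⧸ Ideal.span {(p : A)}) →+* A ⧸ Ideal.span {(p : A) ^ n})
    (hθ : ∀ x : WittVector p (A ⧸ Ideal.span {(p : A) ^ n}),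
      θ (WittVector.truncate n (map (Ideal.Quotient.factor
          (Ideal.span_singleton_le_span_singleton.2 (dvd_pow_self (p : A) hn))) x)) =
        ghostComponent n x) :
    θ = thetaFrob n 0 := by
  refine (RingHom.cancel_right (surjective_truncate_comp_map n)).1 (RingHom.ext fun w => ?_)
  have hmap : map (Ideal.Quotient.factor
      (Ideal.span_singleton_le_span_singleton.2 (dvd_pow_self (p : A) hn)))
      (map (Ideal.Quotient.mk _) w) = map π w := by
    ext j
    simp only [map_coeff, Ideal.Quotient.factor_mk]
  simp only [RingHom.comp_apply]
  rw [thetaFrob_truncate_map, ← hmap, hθ, ghostComponent_map, add_zero]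

variable [CharP (A ⧸ Ideal.span {(p : A)}) p]

lemma thetaFrob_zero_iterate_truncFrobenius (m i : ℕ)
    (y : TruncatedWittVector p m (A ⧸ Ideal.span {(p : A)})) :
    thetaFrob m 0 ((truncFrobenius p)^[i] y) = thetaFrob m i y := by
  obtain ⟨w, rfl⟩ := surjective_truncate_comp_map (p := p) (A := A) m y
  rw [RingHom.comp_apply, truncFrobenius_iterate_truncate, ← map_iterate_frobenius,
    thetaFrob_truncate_map, thetaFrob_truncate_map, ghostComponent_iterate_frobenius, add_zero]

lemma exists_xi_mul_eq_truncate_iterate_verschiebung (hpA : (p : A) ∈ nonZeroDivisors A)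
    (hic : ∀ x : Localization.Away (p : A), IsIntegral A x →
      ∃ a : A, algebraMap A (Localization.Away (p : A)) a = x)
    (m i : ℕ) {r : A} (hr : r ^ p ^ (m + 1 + i) = p) {c : A ⧸ Ideal.span {(p : A)}}
    (hc : thetaFrob (m + 1) i
      (WittVector.truncate (m + 1) (verschiebung^[m] (teichmuller p c))) = 0) :
    ∃ x, xi (m + 1) r * x = WittVector.truncate (m + 1) (verschiebung^[m] (teichmuller p c)) := by
  obtain ⟨a, rfl⟩ := Ideal.Quotient.mk_surjective c
  rw [thetaFrob_truncate_iterate_verschiebung, Ideal.Quotient.eq_zero_iff_mem,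
    Ideal.mem_span_singleton, pow_succ] at hc
  have hdvd : (p : A) ∣ a ^ p ^ (i + 1) := by
    obtain ⟨t, ht⟩ := hc
    exact ⟨t, (mul_cancel_left_mem_nonZeroDivisors (pow_mem hpA m)).1 (by rw [ht, mul_assoc])⟩
  have hr' : (r ^ p ^ m) ^ p ^ (i + 1) = p := by
    rw [← pow_mul, ← pow_add, show m + (i + 1) = m + 1 + i by omega, hr]
  obtain ⟨d, rfl⟩ := dvd_of_pow_eq_of_dvd_pow hpA hic (pow_ne_zero _ hp.out.ne_zero) hr' hdvd
  refine ⟨WittVector.truncate (m + 1) (verschiebung^[m] (teichmuller p (π d))), ?_⟩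
  rw [xi, truncate_teichmuller_sub_mul_iterate_verschiebung, ← map_pow, ← map_mul, mul_comm]

lemma exists_xi_mul_eq_of_thetaFrob_eq_zero (hpA : (p : A) ∈ nonZeroDivisors A)
    (hic : ∀ x : Localization.Away (p : A), IsIntegral A x →
      ∃ a : A, algebraMap A (Localization.Away (p : A)) a = x)
    (m i : ℕ) {r : A} (hr : r ^ p ^ (m + i) = p)
    {y : TruncatedWittVector p m (A ⧸ Ideal.span {(p : A)})} (hy : thetaFrob m i y = 0) :
    ∃ x, xi m r * x = y := by
  induction m generalizing i with
  | zero => exact ⟨0, TruncatedWittVector.ext fun j => j.elim0⟩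
  | succ m ih =>
    obtain ⟨x', hx'⟩ := ih (i + 1) (by rwa [← add_assoc, Nat.add_right_comm])
      (by rw [← factor_thetaFrob, hy, map_zero])
    obtain ⟨x, rfl⟩ := TruncatedWittVector.truncate_surjective m.le_succ x'
    have hz : TruncatedWittVector.truncate m.le_succ (y - xi (m + 1) r * x) = 0 := by
      rw [map_sub, map_mul, truncate_xi, hx', sub_self]
    obtain ⟨w, hw⟩ := exists_xi_mul_eq_truncate_iterate_verschiebung hpA hic m i hr
      (by rw [← eq_truncate_iterate_verschiebung_teichmuller hz, map_sub, map_mul, hy,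
        thetaFrob_xi _ _ hr, zero_mul, sub_zero])
    rw [← eq_truncate_iterate_verschiebung_teichmuller hz] at hw
    exact ⟨x + w, by rw [mul_add, hw, add_sub_cancel]⟩

end Theta

end WittTheta

theorem statement9 (p : ℕ) [hp : Fact p.Prime]
    (A : Type*) [CommRing A]
    -- ... which is `ℤ_(p)`-flat ...
    (hflat : ∀ x : A, (p : A) * x = 0 → x = 0)
    -- ... integrally closed in `A[1/p]` ...
    (hic : ∀ x : Localization.Away (p : A), IsIntegral A x →
      ∃ a : A, algebraMap A (Localization.Away (p : A)) a = x)
    -- ... the Frobenius of `A/pA` is surjective ...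
    [CharP (A ⧸ Ideal.span {(p : A)}) p]
    (hfrob : ∀ y : A ⧸ Ideal.span {(p : A)}, ∃ x, x ^ p = y)
    -- ... and `(p_m)_{0 ≤ m ≤ N}` is a compatible system of `p`-power roots of `p`
    (N : ℕ) (pseq : ℕ → A) (hp0 : pseq 0 = (p : A))
    (hpsucc : ∀ m : ℕ, m < N → pseq (m + 1) ^ p = pseq m)
    (n i : ℕ) (hn : 1 ≤ n) (hni : n + i ≤ N)
    -- `θ_n` : the homomorphism of Statement 7
    (θn : TruncatedWittVector p n (A ⧸ Ideal.span {(p : A)}) →+* A ⧸ Ideal.span {(p : A) ^ n})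
    (hθ : ∀ x : WittVector p (A ⧸ Ideal.span {(p : A) ^ n}),
      θn (WittVector.truncate n (WittVector.map
          (Ideal.Quotient.factor
            (Ideal.span_singleton_le_span_singleton.2 (dvd_pow_self (p : A) (by omega)))) x))
        = WittVector.ghostComponent n x)
    -- `ξ_{n+i} = [p̄_{n+i}] - p ∈ W_{n+i}(A/pA)` and its restriction `R^i(ξ_{n+i})`
    (ξ : TruncatedWittVector p n (A ⧸ Ideal.span {(p : A)}))
    (hξ : ξ = TruncatedWittVector.truncate (Nat.le_add_right n i)
      (WittVector.truncate (n + i) (WittVector.teichmuller p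
          (Ideal.Quotient.mk (Ideal.span {(p : A)}) (pseq (n + i))))
        - (p : TruncatedWittVector p (n + i) (A ⧸ Ideal.span {(p : A)})))) :
    -- exactness in the middle : `ker (θ_n ∘ F^i) = R^i(ξ_{n+i}) · W_n(A/pA)` ...
    (∀ y : TruncatedWittVector p n (A ⧸ Ideal.span {(p : A)}),
      θn ((truncFrobenius p)^[i] y) = 0 ↔ ∃ x, ξ * x = y) ∧
    -- ... and surjectivity of `θ_n ∘ F^i`
    Function.Surjective (fun y : TruncatedWittVector p n (A ⧸ Ideal.span {(p : A)}) =>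
      θn ((truncFrobenius p)^[i] y)) := by
  have hpA : (p : A) ∈ nonZeroDivisors A :=
    mem_nonZeroDivisors_iff_right.2 fun x hx => hflat x (by rwa [mul_comm])
  have hr : pseq (n + i) ^ p ^ (n + i) = p :=
    WittTheta.pow_pow_eq_of_pow_succ_eq hp0 hpsucc hni
  have hθF : ∀ y, θn ((truncFrobenius p)^[i] y) = WittTheta.thetaFrob n i y := fun y => by
    rw [WittTheta.eq_thetaFrob_zero (by omega) θn hθ,
      WittTheta.thetaFrob_zero_iterate_truncFrobenius]
  have hξ' : ξ = WittTheta.xi n (pseq (n + i)) := by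
    rw [hξ, map_sub, TruncatedWittVector.truncate_wittVector_truncate, map_natCast,
      WittTheta.xi, map_sub, map_natCast]
  simp only [hθF, hξ']
  refine ⟨fun y => ⟨WittTheta.exists_xi_mul_eq_of_thetaFrob_eq_zero hpA hic n i hr, ?_⟩,
    WittTheta.thetaFrob_surjective hfrob n i⟩
  rintro ⟨x, rfl⟩
  rw [map_mul, WittTheta.thetaFrob_xi n i hr, zero_mul]
end
end

section
/- Let P be a fine saturated monoid, λ ∈ P, and suppose the homomorphism ϑ: N → P, 1 ↦ λ, is saturated, and that −λ ∉ P and for every t ∈ P there is n ∈ N with t − nλ ∉ P (inside P^gp). Let Λ = P/⟨λ⟩ be the quotient monoid with projection q: P → Λ. Then: (i) Λ is saturated; (ii) for every x ∈ Λ, the fiber q^{-1}(x) has a unique minimal element x̃ for the preorder of P; (iii) for every x ∈ Λ and n ≥ 0, the minimal lift of nx equals n·x̃. -/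
/-!
STATEMENT 10.  Let `P` be a fine saturated monoid (written additively), `λ ∈ P`, and
suppose that the homomorphism `ϑ : ℕ → P`, `1 ↦ λ`, is saturated, that `-λ ∉ P` and that
for every `t ∈ P` there is `n ∈ ℕ` with `t - n·λ ∉ P` (inside `P^gp`).  Let `Λ = P/⟨λ⟩`
be the quotient monoid with projection `q : P → Λ`.  Then :
(i)   `Λ` is saturated (in particular integral);
(ii)  every fiber `q⁻¹(x)` has a unique minimal element `x̃` for the preorder of `P`;
(iii) for every `x ∈ Λ` and `n ≥ 0`, the minimal lift of `n•x` is `n•x̃`.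

Conventions : `P` integral = cancellative (`AddCancelCommMonoid`), `P` fine = integral
and finitely generated; saturatedness of `P` and of `Λ`, the saturatedness of `ϑ`, and
the conditions `-λ ∉ P`, `t - n·λ ∉ P` are all expressed elementwise (via the embedding
into the group envelope).  The quotient `Λ` is realized as the quotient by the additive
congruence `x ∼ y ⇔ ∃ a b, x + a•λ = y + b•λ`.
-/

/-- The additive congruence on `P` defining the quotient monoid `Λ = P/⟨λ⟩`. -/
def lamCon (P : Type*) [AddCancelCommMonoid P] (lam : P) : AddCon P where
  r x y := ∃ a b : ℕ, x + a • lam = y + b • lam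
  iseqv := by
    refine ⟨fun x => ⟨0, 0, rfl⟩, ?_, ?_⟩
    · rintro x y ⟨a, b, h⟩; exact ⟨b, a, h.symm⟩
    · rintro x y z ⟨a, b, h1⟩ ⟨c, d, h2⟩
      refine ⟨a + c, d + b, ?_⟩
      have := congrArg (· + c • lam) h1
      try simp only at this
      calc x + (a + c) • lam = x + a • lam + c • lam := by rw [add_nsmul, add_assoc]
        _ = y + c • lam + b • lam := by rw [this]; abel
        _ = z + d • lam + b • lam := by rw [h2]
        _ = z + (d + b) • lam := by rw [add_nsmul, add_assoc]
  add' := by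
    rintro w x y z ⟨a, b, h1⟩ ⟨c, d, h2⟩
    refine ⟨a + c, b + d, ?_⟩
    calc w + y + (a + c) • lam = (w + a • lam) + (y + c • lam) := by
          rw [add_nsmul]; abel
      _ = (x + b • lam) + (z + d • lam) := by rw [h1, h2]
      _ = x + z + (b + d) • lam := by rw [add_nsmul]; abel

/-! Call `m ∈ P` λ-reduced if `m - λ ∉ P`.  If `y + aλ = m + bλ` with `m` reduced then `a ≤ b`,
so `y = m + (b - a)λ`: a reduced element is the minimal lift of its class, and two reduced
elements of one class coincide.  Every class contains a reduced element (strip `λ` from `t` as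
often as possible), every minimal lift is reduced because `-λ ∉ P`, and saturatedness of `ϑ`
says exactly that `λ ≤ k•m` forces `λ ≤ m`, so `k•x̃` is again reduced. -/

def AddMonoid.IsSaturated (M : Type*) [AddMonoid M] : Prop :=
  ∀ u v : M, ∀ k : ℕ, 1 ≤ k → (∃ w, k • u = k • v + w) → ∃ t, u = v + t

section LamQuotient

variable {P : Type*} [AddCancelCommMonoid P] {lam : P}

def IsLamReduced (lam m : P) : Prop := ¬ ∃ v, m = lam + v

def IsMinLift (lam : P) (x : (lamCon P lam).Quotient) (m : P) : Prop :=
  AddCon.mk' (lamCon P lam) m = x ∧ ∀ y : P, AddCon.mk' (lamCon P lam) y = x → ∃ w, y = m + w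

theorem lamCon_mk'_eq_iff {x y : P} :
    AddCon.mk' (lamCon P lam) x = AddCon.mk' (lamCon P lam) y ↔ lamCon P lam x y :=
  AddCon.eq _

theorem exists_eq_add_nsmul_of_lamCon {x y : P} (h : lamCon P lam x y) :
    ∃ c : ℕ, x = y + c • lam ∨ y = x + c • lam := by
  obtain ⟨a, b, h⟩ := h
  rcases le_total a b with hab | hab
  · obtain ⟨c, rfl⟩ := Nat.exists_eq_add_of_le hab
    refine ⟨c, Or.inl (add_right_cancel (b := a • lam) ?_)⟩
    rw [h, add_nsmul]; abel
  · obtain ⟨c, rfl⟩ := Nat.exists_eq_add_of_le hab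
    refine ⟨c, Or.inr (add_right_cancel (b := b • lam) ?_)⟩
    rw [← h, add_nsmul]; abel

instance : IsRightCancelAdd (lamCon P lam).Quotient where
  add_right_cancel c a b h := by
    obtain ⟨x, rfl⟩ := AddCon.mk'_surjective a
    obtain ⟨y, rfl⟩ := AddCon.mk'_surjective b
    obtain ⟨z, rfl⟩ := AddCon.mk'_surjective c
    obtain ⟨a, b, h⟩ := lamCon_mk'_eq_iff.1 (by simpa only [← map_add] using h)
    refine lamCon_mk'_eq_iff.2 ⟨a, b, add_right_cancel (b := z) ?_⟩
    rw [add_right_comm, h, add_right_comm]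

theorem isSaturated_lamCon_quotient (hPsat : AddMonoid.IsSaturated P) :
    AddMonoid.IsSaturated (lamCon P lam).Quotient := by
  rintro u v k hk ⟨w, hw⟩
  obtain ⟨p, rfl⟩ := AddCon.mk'_surjective u
  obtain ⟨q, rfl⟩ := AddCon.mk'_surjective v
  obtain ⟨r, rfl⟩ := AddCon.mk'_surjective w
  rw [← map_nsmul, ← map_nsmul, ← map_add, lamCon_mk'_eq_iff] at hw
  obtain ⟨a, b, hab⟩ := hw
  obtain ⟨c, hc⟩ := Nat.exists_eq_add_of_le (Nat.le_mul_of_pos_left a hk)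
  obtain ⟨t, ht⟩ := hPsat (p + a • lam) q k hk ⟨r + (b + c) • lam, by
    rw [nsmul_add, smul_smul, hc, add_nsmul, ← add_assoc, hab, add_nsmul]; abel⟩
  refine ⟨AddCon.mk' _ t, ?_⟩
  rw [← map_add, lamCon_mk'_eq_iff]
  exact ⟨a, 0, by rw [ht, zero_nsmul, add_zero]⟩

namespace IsLamReduced

theorem eq_of_eq_add_nsmul {m y : P} {c : ℕ} (hm : IsLamReduced lam m) (h : m = y + c • lam) :
    m = y := by
  cases c with
  | zero => simpa using h
  | succ c => exact absurd ⟨y + c • lam, by rw [h, succ_nsmul']; abel⟩ hm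

theorem exists_eq_add_of_lamCon {m y : P} (hm : IsLamReduced lam m) (h : lamCon P lam y m) :
    ∃ w, y = m + w := by
  obtain ⟨c, h | h⟩ := exists_eq_add_nsmul_of_lamCon h
  · exact ⟨c • lam, h⟩
  · exact ⟨0, by rw [add_zero, hm.eq_of_eq_add_nsmul h]⟩

theorem eq_of_lamCon {m m' : P} (hm : IsLamReduced lam m) (hm' : IsLamReduced lam m')
    (h : lamCon P lam m m') : m = m' := by
  obtain ⟨c, h | h⟩ := exists_eq_add_nsmul_of_lamCon h
  · exact hm.eq_of_eq_add_nsmul h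
  · exact (hm'.eq_of_eq_add_nsmul h).symm

theorem isMinLift {m : P} (hm : IsLamReduced lam m) :
    IsMinLift lam (AddCon.mk' (lamCon P lam) m) m :=
  ⟨rfl, fun _ hy => hm.exists_eq_add_of_lamCon (lamCon_mk'_eq_iff.1 hy)⟩

theorem nsmul (hneg : ¬ ∃ w : P, lam + w = 0)
    (hϑsat : ∀ (x : P) (k m : ℕ), 1 ≤ k → (∃ w, k • x = m • lam + w) →
      ∃ m' : ℕ, (∃ w', x = m' • lam + w') ∧ m ≤ k * m')
    {m : P} (hm : IsLamReduced lam m) (k : ℕ) : IsLamReduced lam (k • m) := by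
  rintro ⟨v, hv⟩
  rcases k.eq_zero_or_pos with rfl | hk
  · exact hneg ⟨v, by rw [← hv, zero_nsmul]⟩
  obtain ⟨m', ⟨w, hw⟩, hm'⟩ := hϑsat m k 1 hk ⟨v, by rw [one_nsmul, hv]⟩
  obtain ⟨c, rfl⟩ : ∃ c, m' = c + 1 := Nat.exists_eq_succ_of_ne_zero (by rintro rfl; simp at hm')
  exact hm ⟨c • lam + w, by rw [hw, succ_nsmul', add_assoc]⟩

end IsLamReduced

theorem IsMinLift.isLamReduced (hneg : ¬ ∃ w : P, lam + w = 0) {x : (lamCon P lam).Quotient}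
    {m : P} (hm : IsMinLift lam x m) : IsLamReduced lam m := by
  rintro ⟨v, rfl⟩
  have hv : AddCon.mk' (lamCon P lam) v = x :=
    hm.1 ▸ lamCon_mk'_eq_iff.2 ⟨1, 0, by rw [one_nsmul, zero_nsmul, add_zero, add_comm]⟩
  obtain ⟨w, hw⟩ := hm.2 v hv
  refine hneg ⟨w, add_eq_left.1 (?_ : v + (lam + w) = v)⟩
  rw [← add_assoc, add_comm v lam]
  exact hw.symm

theorem exists_isLamReduced_lamCon (hfin : ∀ t : P, ∃ k : ℕ, ¬ ∃ w : P, t = k • lam + w)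
    (p : P) : ∃ m, IsLamReduced lam m ∧ lamCon P lam p m := by
  classical
  obtain ⟨n, hn⟩ : ∃ n, Nat.find (hfin p) = n + 1 := Nat.exists_eq_succ_of_ne_zero fun h =>
    Nat.find_spec (hfin p) ⟨p, by rw [h, zero_nsmul, zero_add]⟩
  obtain ⟨m, hm⟩ := not_not.1 (Nat.find_min (hfin p) (by omega : n < _))
  refine ⟨m, fun ⟨v, hv⟩ => Nat.find_spec (hfin p) ⟨v, ?_⟩, 0, n, ?_⟩
  · rw [hn, hm, hv, succ_nsmul, add_assoc]
  · rw [hm, zero_nsmul, add_zero, add_comm]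

end LamQuotient

theorem statement10_general (P : Type*) [AddCancelCommMonoid P]
    -- ... and saturated
    (hPsat : ∀ u v : P, ∀ k : ℕ, 1 ≤ k → (∃ w, k • u = k • v + w) → ∃ t, u = v + t)
    (lam : P)
    -- `ϑ : ℕ → P`, `1 ↦ λ`, is saturated (Tsuji's elementwise criterion)
    (hϑsat : ∀ (x : P) (k m : ℕ), 1 ≤ k → (∃ w, k • x = m • lam + w) →
      ∃ m' : ℕ, (∃ w', x = m' • lam + w') ∧ m ≤ k * m')
    -- `-λ ∉ P`
    (hneg : ¬ ∃ w : P, lam + w = 0)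
    -- for every `t ∈ P` there is `n` with `t - n·λ ∉ P`
    (hfin : ∀ t : P, ∃ k : ℕ, ¬ ∃ w : P, t = k • lam + w) :
    -- (i) `Λ` is integral and saturated
    ((∀ a b c : (lamCon P lam).Quotient, a + c = b + c → a = b) ∧
     (∀ u v : (lamCon P lam).Quotient, ∀ k : ℕ, 1 ≤ k →
        (∃ w, k • u = k • v + w) → ∃ t, u = v + t)) ∧
    -- (ii) each fiber of `q : P → Λ` has a unique minimal element
    (∀ x : (lamCon P lam).Quotient, ∃! m : P,
      AddCon.mk' _ m = x ∧ ∀ y : P, AddCon.mk' _ y = x → ∃ w, y = m + w) ∧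
    -- (iii) minimal lifts are compatible with multiplication by `n ∈ ℕ`
    (∀ (x : (lamCon P lam).Quotient) (k : ℕ) (m : P),
      (AddCon.mk' _ m = x ∧ ∀ y : P, AddCon.mk' _ y = x → ∃ w, y = m + w) →
      (AddCon.mk' (lamCon P lam) (k • m) = k • x ∧
        ∀ y : P, AddCon.mk' _ y = k • x → ∃ w, y = k • m + w)) := by
  refine ⟨⟨fun _ _ _ => add_right_cancel, isSaturated_lamCon_quotient hPsat⟩, fun x => ?_, ?_⟩
  · obtain ⟨p, rfl⟩ := AddCon.mk'_surjective x
    obtain ⟨m, hm, hpm⟩ := exists_isLamReduced_lamCon hfin p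
    refine ⟨m, lamCon_mk'_eq_iff.2 hpm ▸ hm.isMinLift, fun m' hm' => ?_⟩
    exact (IsMinLift.isLamReduced hneg hm').eq_of_lamCon hm
      (lamCon_mk'_eq_iff.1 (hm'.1.trans (lamCon_mk'_eq_iff.2 hpm)))
  · rintro x k m hmin
    have := ((IsMinLift.isLamReduced hneg hmin).nsmul hneg hϑsat k).isMinLift
    rwa [map_nsmul, hmin.1] at this

theorem statement10 (P : Type*) [AddCancelCommMonoid P]
    -- `P` is fine : integral (cancellative) and finitely generated ...
    [AddMonoid.FG P]
    -- ... and saturated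
    (hPsat : ∀ u v : P, ∀ k : ℕ, 1 ≤ k → (∃ w, k • u = k • v + w) → ∃ t, u = v + t)
    (lam : P)
    -- `ϑ : ℕ → P`, `1 ↦ λ`, is saturated (Tsuji's elementwise criterion)
    (hϑsat : ∀ (x : P) (k m : ℕ), 1 ≤ k → (∃ w, k • x = m • lam + w) →
      ∃ m' : ℕ, (∃ w', x = m' • lam + w') ∧ m ≤ k * m')
    -- `-λ ∉ P`
    (hneg : ¬ ∃ w : P, lam + w = 0)
    -- for every `t ∈ P` there is `n` with `t - n·λ ∉ P`
    (hfin : ∀ t : P, ∃ k : ℕ, ¬ ∃ w : P, t = k • lam + w) :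
    -- (i) `Λ` is integral and saturated
    ((∀ a b c : (lamCon P lam).Quotient, a + c = b + c → a = b) ∧
     (∀ u v : (lamCon P lam).Quotient, ∀ k : ℕ, 1 ≤ k →
        (∃ w, k • u = k • v + w) → ∃ t, u = v + t)) ∧
    -- (ii) each fiber of `q : P → Λ` has a unique minimal element
    (∀ x : (lamCon P lam).Quotient, ∃! m : P,
      AddCon.mk' _ m = x ∧ ∀ y : P, AddCon.mk' _ y = x → ∃ w, y = m + w) ∧
    -- (iii) minimal lifts are compatible with multiplication by `n ∈ ℕ`
    (∀ (x : (lamCon P lam).Quotient) (k : ℕ) (m : P),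
      (AddCon.mk' _ m = x ∧ ∀ y : P, AddCon.mk' _ y = x → ∃ w, y = m + w) →
      (AddCon.mk' (lamCon P lam) (k • m) = k • x ∧
        ∀ y : P, AddCon.mk' _ y = k • x → ∃ w, y = k • m + w)) :=
  statement10_general P hPsat lam hϑsat hneg hfin
end

section
/- Let Â_1 be an O_C-flat ring complete and separated for the p-adic topology (e.g. the p-adic completion of a normal domain flat over O_C), M an Â_1-module of finite type that is O_C-flat, and u an Â_1-linear endomorphism of M. If u induces an automorphism of M/p^α M for some rational α > 0, then u is an automorphism of M. -/
/-!
STATEMENT 11.  Let `Â₁` be an `O_C`-flat ring, complete and separated for the p-adic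
topology, `M` a finite type `Â₁`-module which is `O_C`-flat, and `u` an `Â₁`-linear
endomorphism of `M`.  If `u` induces an automorphism of `M/p^α M` for some rational
`α > 0`, then `u` is an automorphism of `M`.

Here `O_C` is the `p`-adic completion of `O_{K̄}`, the integral closure of `ℤ_p` in an
algebraic closure of `ℚ_p`; it is presented below as a ring `OC` together with a ring
homomorphism `ι : O_{K̄} →+* OC` which identifies `OC` with the `p`-adic completion of
`O_{K̄}`.  The element `p^α` (for a rational `α = r/q > 0`) is presented as an element
`pα` of `O_{K̄}` satisfying `pα ^ q = p ^ r`.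
-/

noncomputable section

theorem statement11
    (p : ℕ) [Fact p.Prime]
    -- `O_C`, the `p`-adic completion of `O_{K̄} = integralClosure ℤ_[p] (K̄)`
    (OC : Type*) [CommRing OC]
    (ι : (integralClosure ℤ_[p] (AlgebraicClosure ℚ_[p])) →+* OC)
    (hOCcomplete : IsAdicComplete (Ideal.span {(p : OC)}) OC)
    (hdense : ∀ y : OC, ∀ n : ℕ, ∃ x, y - ι x ∈ Ideal.span {(p : OC) ^ n})
    (hisom : ∀ (x : (integralClosure ℤ_[p] (AlgebraicClosure ℚ_[p]))) (n : ℕ),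
        ι x ∈ Ideal.span {(p : OC) ^ n} →
        x ∈ Ideal.span {((p : ℕ) : (integralClosure ℤ_[p] (AlgebraicClosure ℚ_[p]))) ^ n})
    -- `A` : an `O_C`-flat ring, complete and separated for the `p`-adic topology
    (A : Type*) [CommRing A] [Algebra OC A] [Module.Flat OC A]
    [IsAdicComplete (Ideal.span {(p : A)}) A]
    -- `M` : a finite type `A`-module which is `O_C`-flat
    (M : Type*) [AddCommGroup M] [Module A M] [Module.Finite A M]
    [Module OC M] [IsScalarTower OC A M] [Module.Flat OC M]
    -- `p^α` for a rational number `α = r/q > 0`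
    (q r : ℕ) (hq : 0 < q) (hr : 0 < r)
    (pα : (integralClosure ℤ_[p] (AlgebraicClosure ℚ_[p])))
    (hpα : pα ^ q = ((p : ℕ) : (integralClosure ℤ_[p] (AlgebraicClosure ℚ_[p]))) ^ r)
    -- `u` : an `A`-linear endomorphism of `M`
    (u : M →ₗ[A] M)
    -- `N = p^α M`
    (N : Submodule A M)
    (hN : N = Submodule.span A (Set.range fun m : M => algebraMap OC A (ι pα) • m))
    (hu : N ≤ N.comap u)
    -- hypothesis : `u` induces an automorphism of `M / p^α M`
    (hbij : Function.Bijective (Submodule.mapQ N N u hu)) :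
    Function.Bijective u := by
  set c : A := algebraMap OC A (ι pα) with hc
  -- `c ^ q = p ^ r` in `A`
  have hcq : c ^ q = (p : A) ^ r := by
    rw [hc, ← map_pow, ← map_pow, hpα]
    push_cast
    simp [map_pow, map_natCast]
  -- `p` lies in the Jacobson radical of `A`
  have hpj : (p : A) ∈ Ideal.jacobson (⊥ : Ideal A) := by
    exact IsAdicComplete.le_jacobson_bot (I := Ideal.span {(p : A)})
      (Ideal.mem_span_singleton_self _)
  -- hence so does `c`
  have hcj : c ∈ Ideal.jacobson (⊥ : Ideal A) := by
    rw [Ideal.jacobson] at hpj ⊢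
    rw [Ideal.mem_sInf] at hpj ⊢
    intro J hJ
    have hmax : J.IsMaximal := hJ.2
    have hprime : J.IsPrime := hmax.isPrime
    have : c ^ q ∈ J := by
      rw [hcq]
      exact Ideal.pow_mem_of_mem J (hpj hJ) r hr
    exact hprime.mem_of_pow_mem q this
  -- `N ≤ (c) • ⊤`
  have hNle : N ≤ (Ideal.span {c} : Ideal A) • (⊤ : Submodule A M) := by
    rw [hN]
    refine Submodule.span_le.mpr ?_
    rintro _ ⟨m, rfl⟩
    exact Submodule.smul_mem_smul (Ideal.mem_span_singleton_self c) Submodule.mem_top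
  -- surjectivity mod `N` gives `⊤ ≤ range u ⊔ (c) • ⊤`
  have htop : (⊤ : Submodule A M) ≤
      LinearMap.range u ⊔ (Ideal.span {c} : Ideal A) • (⊤ : Submodule A M) := by
    intro m _
    obtain ⟨y, hy⟩ := hbij.2 (Submodule.Quotient.mk m)
    obtain ⟨x, rfl⟩ := Submodule.Quotient.mk_surjective N y
    rw [Submodule.mapQ_apply] at hy
    have hmem : m - u x ∈ N := by
      simpa using N.neg_mem ((Submodule.Quotient.eq N).mp hy)
    have : m = u x + (m - u x) := by abel
    rw [this]
    exact Submodule.add_mem_sup (LinearMap.mem_range_self u x) (hNle hmem)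
  -- Nakayama : `u` is surjective
  have hsurj : Function.Surjective u := by
    rw [← LinearMap.range_eq_top, eq_top_iff]
    exact Submodule.le_of_le_smul_of_le_jacobson_bot
      (Module.finite_def.mp inferInstance) (Ideal.span_le.mpr (by simpa using hcj)) htop
  exact ⟨OrzechProperty.injective_of_surjective_endomorphism u hsurj, hsurj⟩
end
end

section
/- Let X be a scheme, T a locally free O_X-module of finite type with dual Ω, L a T-torsor on the Zariski site of X, and F the sheaf of affine functions on L. Then F sits in a short exact sequence of O_X-modules 0 → O_X → F → Ω → 0, where the first map sends a section of O_X to the corresponding constant function and the second map sends an affine function to its linear term. -/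
/-!
STATEMENT 15.  Let `X` be a scheme, `T` a locally free `O_X`-module of finite type with
dual `Ω`, `L` a `T`-torsor on the Zariski site of `X`, and `F` the sheaf of affine
functions on `L`.  Then `F` sits in a short exact sequence of `O_X`-modules
`0 → O_X → F → Ω → 0`, where the first map sends a section of `O_X` to the corresponding
constant function and the second map sends an affine function to its linear term.

Sheaves of `O_X`-modules and torsors under them on the Zariski site of `X` are presented
by their sections over the opens of `X` (structures `ModSh`, `TorsSh` below); sections
of `Ω` over `U` are `O|U`-linear natural families `η : T|U → O|U` (`IsDualSec`); affine
functions on `L|U` with linear term `η` are natural families `f : L|U → O|U` with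
`f(s + t) = f(s) + η(t)` (`IsAffineFam`).  Exactness of the sequence of sheaves is
expressed by: constants are affine with zero linear term, the linear term of an affine
function is well defined, the map `O → F` is (sectionwise) injective with image the
kernel of the linear-term map, and the linear-term map `F → Ω` is locally surjective.
-/

open AlgebraicGeometry CategoryTheory Opposite

noncomputable section

universe u v

/-- A sheaf of `O_X`-modules on (the Zariski site of) a scheme `X`, presented by its
sections and restriction maps. -/
structure ModSh (X : Scheme.{u}) where
  sec : X.Opens → Type v
  ab : ∀ U, AddCommGroup (sec U)
  mod : ∀ U, Module ↥(X.presheaf.obj (op U)) (sec U)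
  res : ∀ {U V : X.Opens}, V ≤ U → sec U → sec V
  res_rfl : ∀ (U : X.Opens) (t : sec U), res (le_refl U) t = t
  res_res : ∀ {U V W : X.Opens} (h1 : V ≤ U) (h2 : W ≤ V) (t : sec U),
    res h2 (res h1 t) = res (h2.trans h1) t
  res_add : ∀ {U V : X.Opens} (h : V ≤ U) (s t : sec U), res h (s + t) = res h s + res h t
  res_smul : ∀ {U V : X.Opens} (h : V ≤ U) (a : ↥(X.presheaf.obj (op U))) (t : sec U),
    res h (a • t) = (X.presheaf.map (homOfLE h).op a) • res h t

attribute [instance] ModSh.ab ModSh.mod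

/-- A torsor under a sheaf of `O_X`-modules `T` on the Zariski site of `X` : a sheaf of
sets with a simply transitive `T`-action, which is locally nonempty. -/
structure TorsSh (X : Scheme.{u}) (T : ModSh.{u, v} X) where
  sec : X.Opens → Type v
  res : ∀ {U V : X.Opens}, V ≤ U → sec U → sec V
  res_rfl : ∀ (U : X.Opens) (s : sec U), res (le_refl U) s = s
  res_res : ∀ {U V W : X.Opens} (h1 : V ≤ U) (h2 : W ≤ V) (s : sec U),
    res h2 (res h1 s) = res (h2.trans h1) s
  act : ∀ U : X.Opens, sec U → T.sec U → sec U
  act_zero : ∀ (U : X.Opens) (s : sec U), act U s 0 = s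
  act_add : ∀ (U : X.Opens) (s : sec U) (t t' : T.sec U),
    act U (act U s t) t' = act U s (t + t')
  res_act : ∀ {U V : X.Opens} (h : V ≤ U) (s : sec U) (t : T.sec U),
    res h (act U s t) = act V (res h s) (T.res h t)
  trans : ∀ (U : X.Opens) (s s' : sec U), ∃! t : T.sec U, act U s t = s'
  locNE : ∀ (x : X) (U : X.Opens), x ∈ U →
    ∃ V : X.Opens, x ∈ V ∧ V ≤ U ∧ Nonempty (sec V)

/-- The sheaf condition for a family of sections with restriction maps. -/
def IsSheafData (X : Scheme.{u}) (sec : X.Opens → Type v)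
    (res : ∀ {U V : X.Opens}, V ≤ U → sec U → sec V) : Prop :=
  ∀ (U : X.Opens) (S : Set X.Opens) (hS : ∀ V ∈ S, V ≤ U), U ≤ sSup S →
    ∀ f : ∀ V ∈ S, sec V,
      (∀ (V) (hV : V ∈ S) (W) (hW : W ∈ S),
        res (inf_le_left : V ⊓ W ≤ V) (f V hV) =
          res (inf_le_right : V ⊓ W ≤ W) (f W hW)) →
      ∃! s : sec U, ∀ (V) (hV : V ∈ S), res (hS V hV) s = f V hV

/-- A section over `U` of the dual `Ω` of `T` : an `O`-linear natural family of maps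
`T|U → O|U`. -/
def IsDualSec (X : Scheme.{u}) (T : ModSh.{u, v} X) (U : X.Opens)
    (η : ∀ V : X.Opens, V ≤ U → T.sec V → ↥(X.presheaf.obj (op V))) : Prop :=
  (∀ (V) (hV : V ≤ U) (t t' : T.sec V), η V hV (t + t') = η V hV t + η V hV t') ∧
  (∀ (V) (hV : V ≤ U) (a : ↥(X.presheaf.obj (op V))) (t : T.sec V),
    η V hV (a • t) = a * η V hV t) ∧
  (∀ (V) (hV : V ≤ U) (W) (hWV : W ≤ V) (t : T.sec V),
    η W (hWV.trans hV) (T.res hWV t) = X.presheaf.map (homOfLE hWV).op (η V hV t))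

/-- An affine function on `L|U`, with linear term `η` : a natural family of maps
`L|U → O|U` satisfying `f(s + t) = f(s) + η(t)`. -/
def IsAffineFam (X : Scheme.{u}) (T : ModSh.{u, v} X) (L : TorsSh X T) (U : X.Opens)
    (f : ∀ V : X.Opens, V ≤ U → L.sec V → ↥(X.presheaf.obj (op V)))
    (η : ∀ V : X.Opens, V ≤ U → T.sec V → ↥(X.presheaf.obj (op V))) : Prop :=
  (∀ (V) (hV : V ≤ U) (W) (hWV : W ≤ V) (s : L.sec V),
    f W (hWV.trans hV) (L.res hWV s) = X.presheaf.map (homOfLE hWV).op (f V hV s)) ∧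
  (∀ (V) (hV : V ≤ U) (s : L.sec V) (t : T.sec V),
    f V hV (L.act V s t) = f V hV s + η V hV t)

theorem statement15 (X : Scheme.{u}) (T : ModSh.{u, v} X)
    -- `T` is a sheaf ...
    (hTsheaf : IsSheafData X T.sec fun {U V} h => T.res h)
    -- ... which is locally free of finite type
    (hTlf : ∀ x : X, ∃ U : X.Opens, x ∈ U ∧ ∃ (k : ℕ)
      (e : ∀ V : X.Opens, V ≤ U → (T.sec V ≃ (Fin k → ↥(X.presheaf.obj (op V))))),
      (∀ (V) (hV : V ≤ U) (t t' : T.sec V), e V hV (t + t') = e V hV t + e V hV t') ∧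
      (∀ (V) (hV : V ≤ U) (a : ↥(X.presheaf.obj (op V))) (t : T.sec V),
        e V hV (a • t) = a • e V hV t) ∧
      (∀ (V) (hV : V ≤ U) (W) (hWV : W ≤ V) (t : T.sec V),
        e W (hWV.trans hV) (T.res hWV t) =
          fun i => X.presheaf.map (homOfLE hWV).op (e V hV t i)))
    -- `L` : a `T`-torsor on the Zariski site of `X`, which is a sheaf
    (L : TorsSh X T)
    (hLsheaf : IsSheafData X L.sec fun {U V} h => L.res h) :
    -- Then `0 → O_X → F → Ω → 0` is an exact sequence of `O_X`-modules :
    -- (0) constant functions are affine, with zero linear term (the map `O_X → F`) ;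
    (∀ (U : X.Opens) (a : ↥(X.presheaf.obj (op U))),
      IsAffineFam X T L U (fun V hV _s => X.presheaf.map (homOfLE hV).op a)
        (fun _V _hV _t => 0) ∧ IsDualSec X T U (fun _V _hV _t => 0)) ∧
    -- (1) the linear term of an affine function is well defined (the map `F → Ω`) ;
    (∀ (U : X.Opens) f η η', IsDualSec X T U η → IsDualSec X T U η' →
      IsAffineFam X T L U f η → IsAffineFam X T L U f η' → η = η') ∧
    -- (2) the map `O_X → F` is injective ;
    (∀ (U : X.Opens) (a b : ↥(X.presheaf.obj (op U))),
      (∀ (V) (hV : V ≤ U) (_s : L.sec V),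
        X.presheaf.map (homOfLE hV).op a = X.presheaf.map (homOfLE hV).op b) → a = b) ∧
    -- (3) exactness at `F` : an affine function with zero linear term is constant ;
    (∀ (U : X.Opens) f η, IsDualSec X T U η → IsAffineFam X T L U f η →
      (∀ (V) (hV : V ≤ U) (t : T.sec V), η V hV t = 0) →
      ∃ a : ↥(X.presheaf.obj (op U)), ∀ (V) (hV : V ≤ U) (s : L.sec V),
        f V hV s = X.presheaf.map (homOfLE hV).op a) ∧
    -- (4) the linear-term map `F → Ω` is locally surjective.
    (∀ (U : X.Opens) η, IsDualSec X T U η → ∀ x : X, x ∈ U →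
      ∃ V : X.Opens, x ∈ V ∧ ∃ (hVU : V ≤ U)
        (f : ∀ W : X.Opens, W ≤ V → L.sec W → ↥(X.presheaf.obj (op W))),
        IsAffineFam X T L V f (fun W hW => η W (hW.trans hVU))) := by
    classical
  -- restriction composition in the structure sheaf
  have resO : ∀ {U V W : X.Opens} (h1 : V ≤ U) (h2 : W ≤ V) (a : ↥(X.presheaf.obj (op U))),
      X.presheaf.map (homOfLE h2).op (X.presheaf.map (homOfLE h1).op a)
        = X.presheaf.map (homOfLE (h2.trans h1)).op a := by
    intro U V W h1 h2 a
    rw [← comp_apply, ← Functor.map_comp]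
    rfl
  refine ⟨?_, ?_, ?_, ?_, ?_⟩
  · -- (0) constants are affine with zero linear term
    intro U a
    refine ⟨⟨?_, ?_⟩, ?_, ?_, ?_⟩
    · intro V hV W hWV s
      exact (resO hV hWV a).symm
    · intro V hV s t; simp
    · intro V hV t t'; simp
    · intro V hV c t; simp
    · intro V hV W hWV t; simp
  · -- (1) linear term is well defined
    intro U f η η' hη hη' hf hf'
    funext V hV t
    -- cover V by opens where L has a section
    set ι := {x : X // x ∈ V} with hι
    have hch : ∀ i : ι, ∃ W : X.Opens, i.1 ∈ W ∧ W ≤ V ∧ Nonempty (L.sec W) :=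
      fun i => L.locNE i.1 V i.2
    choose Vf hxVf hVfV hne using hch
    have hcover : V ≤ iSup Vf := by
      intro x hx
      exact TopologicalSpace.Opens.mem_iSup.mpr ⟨⟨x, hx⟩, hxVf ⟨x, hx⟩⟩
    apply X.sheaf.eq_of_locally_eq' Vf V (fun i => homOfLE (hVfV i)) hcover
    intro i
    obtain ⟨s⟩ := hne i
    have h1 := hf.2 (Vf i) ((hVfV i).trans hV) s (T.res (hVfV i) t)
    have h2 := hf'.2 (Vf i) ((hVfV i).trans hV) s (T.res (hVfV i) t)
    have h3 : η (Vf i) ((hVfV i).trans hV) (T.res (hVfV i) t)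
        = η' (Vf i) ((hVfV i).trans hV) (T.res (hVfV i) t) := by
      have := h1.symm.trans h2
      exact (add_right_injective _ this)
    have h4 := hη.2.2 V hV (Vf i) (hVfV i) t
    have h5 := hη'.2.2 V hV (Vf i) (hVfV i) t
    exact h4.symm.trans (h3.trans h5)
  · -- (2) injectivity of O → F
    intro U a b hab
    set ι := {x : X // x ∈ U} with hι
    have hch : ∀ i : ι, ∃ W : X.Opens, i.1 ∈ W ∧ W ≤ U ∧ Nonempty (L.sec W) :=
      fun i => L.locNE i.1 U i.2
    choose Vf hxVf hVfU hne using hch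
    have hcover : U ≤ iSup Vf := by
      intro x hx
      exact TopologicalSpace.Opens.mem_iSup.mpr ⟨⟨x, hx⟩, hxVf ⟨x, hx⟩⟩
    apply X.sheaf.eq_of_locally_eq' Vf U (fun i => homOfLE (hVfU i)) hcover
    intro i
    obtain ⟨s⟩ := hne i
    exact hab (Vf i) (hVfU i) s
  · -- (3) exactness at F
    intro U f η hη hf hη0
    set ι := {x : X // x ∈ U} with hι
    have hch : ∀ i : ι, ∃ W : X.Opens, i.1 ∈ W ∧ W ≤ U ∧ Nonempty (L.sec W) :=
      fun i => L.locNE i.1 U i.2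
    choose Vf hxVf hVfU hne using hch
    have hcover : U ≤ iSup Vf := by
      intro x hx
      exact TopologicalSpace.Opens.mem_iSup.mpr ⟨⟨x, hx⟩, hxVf ⟨x, hx⟩⟩
    have sLi : ∀ i : ι, L.sec (Vf i) := fun i => Classical.choice (hne i)
    -- f is constant on each open where L has sections
    have hconst : ∀ (W : X.Opens) (hW : W ≤ U) (s s' : L.sec W),
        f W hW s = f W hW s' := by
      intro W hW s s'
      obtain ⟨t, ht, -⟩ := L.trans W s s'
      have := hf.2 W hW s t
      rw [ht] at this
      rw [this, hη0 W hW t, add_zero]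
    set sf : ∀ i : ι, ↥(X.presheaf.obj (op (Vf i))) :=
      fun i => f (Vf i) (hVfU i) (sLi i) with hsf
    have hcomp : TopCat.Presheaf.IsCompatible X.sheaf.1 Vf sf := by
      intro i j
      have hi : Vf i ⊓ Vf j ≤ Vf i := inf_le_left
      have hj : Vf i ⊓ Vf j ≤ Vf j := inf_le_right
      have h1 := hf.1 (Vf i) (hVfU i) (Vf i ⊓ Vf j) hi (sLi i)
      have h2 := hf.1 (Vf j) (hVfU j) (Vf i ⊓ Vf j) hj (sLi j)
      have h3 : f (Vf i ⊓ Vf j) (hi.trans (hVfU i)) (L.res hi (sLi i))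
          = f (Vf i ⊓ Vf j) (hj.trans (hVfU j)) (L.res hj (sLi j)) :=
        hconst _ _ _ _
      exact h1.symm.trans (h3.trans h2)
    obtain ⟨a, ha, -⟩ := X.sheaf.existsUnique_gluing' Vf U
      (fun i => homOfLE (hVfU i)) hcover sf hcomp
    refine ⟨a, ?_⟩
    intro V hV s
    -- prove equality locally on V ⊓ Vf i
    have hcover' : V ≤ iSup (fun i : ι => V ⊓ Vf i) := by
      intro x hx
      exact TopologicalSpace.Opens.mem_iSup.mpr
        ⟨⟨x, hV hx⟩, hx, hxVf ⟨x, hV hx⟩⟩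
    apply X.sheaf.eq_of_locally_eq' (fun i : ι => V ⊓ Vf i) V
      (fun i => homOfLE inf_le_left) hcover'
    intro i
    have hiV : V ⊓ Vf i ≤ V := inf_le_left
    have hii : V ⊓ Vf i ≤ Vf i := inf_le_right
    have h1 := hf.1 V hV (V ⊓ Vf i) hiV s
    have h2 := hf.1 (Vf i) (hVfU i) (V ⊓ Vf i) hii (sLi i)
    have h3 : f (V ⊓ Vf i) (hiV.trans hV) (L.res hiV s)
        = f (V ⊓ Vf i) (hii.trans (hVfU i)) (L.res hii (sLi i)) := hconst _ _ _ _
    show X.presheaf.map (homOfLE hiV).op (f V hV s)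
        = X.presheaf.map (homOfLE hiV).op (X.presheaf.map (homOfLE hV).op a)
    rw [resO hV hiV a, ← h1, h3, h2]
    have h4 : f (Vf i) (hVfU i) (sLi i) = X.presheaf.map (homOfLE (hVfU i)).op a :=
      (ha i).symm
    rw [h4]
    exact resO (hVfU i) hii a
  · -- (4) local surjectivity
    intro U η hη x hx
    obtain ⟨V, hxV, hVU, ⟨s₀⟩⟩ := L.locNE x U hx
    refine ⟨V, hxV, hVU, ?_⟩
    -- the translation from s₀
    have tr : ∀ (W : X.Opens) (hW : W ≤ V) (s : L.sec W),
        ∃! t : T.sec W, L.act W (L.res hW s₀) t = s :=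
      fun W hW s => L.trans W (L.res hW s₀) s
    set τ : ∀ (W : X.Opens) (hW : W ≤ V), L.sec W → T.sec W :=
      fun W hW s => (tr W hW s).choose with hτ
    have hτ_spec : ∀ (W : X.Opens) (hW : W ≤ V) (s : L.sec W),
        L.act W (L.res hW s₀) (τ W hW s) = s := fun W hW s => (tr W hW s).choose_spec.1
    have hτ_uniq : ∀ (W : X.Opens) (hW : W ≤ V) (s : L.sec W) (t : T.sec W),
        L.act W (L.res hW s₀) t = s → t = τ W hW s := by
      intro W hW s t ht
      have h2 := (tr W hW s).choose_spec.2 t ht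
      exact h2
    refine ⟨fun W hW s => η W (hW.trans hVU) (τ W hW s), ?_, ?_⟩
    · -- naturality
      intro W hW W' hW' s
      have hres : τ W' (hW'.trans hW) (L.res hW' s) = T.res hW' (τ W hW s) := by
        symm
        apply hτ_uniq
        have := congrArg (L.res hW') (hτ_spec W hW s)
        rw [L.res_act] at this
        rw [L.res_res] at this
        exact this
      dsimp only
      rw [hres]
      exact hη.2.2 W (hW.trans hVU) W' hW' (τ W hW s)
    · -- affinity
      intro W hW s t
      have hadd : τ W hW (L.act W s t) = τ W hW s + t := by
        symm
        apply hτ_uniq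
        rw [← L.act_add, hτ_spec W hW s]
      dsimp only
      rw [hadd, hη.1 W (hW.trans hVU) (τ W hW s) t]
end
end
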